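/- arXiv:1211.4999 — 5 statements merged into one kernel-verified Lean document; each statement's English description precedes it below -/
import Mathlib

section
/- Assume the relative quality functions satisfy q_j(A) = 1/(n·C(n−1,|A|)) for every j ∈ C and A ⊆ C∖{j}. Then for every component j ∈ C, the Barlow-Proschan index satisfies I_BP^{(j)} = ∑_{A⊆C, j∈A} d(A)/|A|. -/
/-!
Off a null set of ties, `T_C = T_j` happens exactly when the set `A` of components outliving `j`
is one for which `j` is pivotal (`φ (A ∪ {j}) = 1`, `φ A = 0`). The events "`A` is the set of
components outliving `j`" partition `Ω` and have probabilities `q_j(A)`, so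
`I_BP = ∑_{A ∌ j} (φ (A ∪ {j}) - φ A) q_j(A)`. By Möbius inversion
`φ (A ∪ {j}) - φ A = ∑_{t ⊆ A} d (t ∪ {j})`; after swapping the sums, the coefficient of
`d (t ∪ {j})` is `∑_{t ⊆ A ⊆ C ∖ {j}} 1 / (n C(n-1, |A|))`, which the hockey-stick identity
evaluates to `1 / (|t| + 1)`.
-/

open MeasureTheory Finset

/-- Lifetime of the (sub)system on component set `D` with structure function `χ`
(the maximum over the sets `A ⊆ D` with `χ A = 1` of `min_{i ∈ A} T i`). -/
noncomputable def sysLifeOn {Ω : Type*} {n : ℕ} (T : Fin n → Ω → ℝ)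
    (D : Finset (Fin n)) (χ : Finset (Fin n) → ℝ) (ω : Ω) : ℝ :=
  if h : (D.powerset.filter fun A => χ A = 1).Nonempty then
    (D.powerset.filter fun A => χ A = 1).sup' h
      (fun A => if hA : A.Nonempty then A.inf' hA fun i => T i ω else 0)
  else 0

/-- The `k`-th order statistic of the lifetimes `(T i)_{i ∈ M}`. -/
noncomputable def orderStat {Ω : Type*} {n : ℕ} (T : Fin n → Ω → ℝ)
    (M : Finset (Fin n)) (k : ℕ) (ω : Ω) : ℝ :=
  ((M.val.map fun i => T i ω).sort (· ≤ ·)).getD (k - 1) 0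

/-- The relative quality function `q_j(A) = Pr(max_{i ∈ C∖A} T_i = T_j < min_{i ∈ A} T_i)`. -/
noncomputable def relQual {Ω : Type*} [MeasurableSpace Ω] {n : ℕ} (μ : Measure Ω)
    (T : Fin n → Ω → ℝ) (j : Fin n) (A : Finset (Fin n)) : ℝ :=
  (μ {ω | (∀ i ∉ A, T i ω ≤ T j ω) ∧ ∀ i ∈ A, T j ω < T i ω}).toReal

/-- `min_{i ∈ A} T i` (with junk value `0` when `A = ∅`). -/
noncomputable def minLifeOn {Ω : Type*} {n : ℕ} (T : Fin n → Ω → ℝ)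
    (A : Finset (Fin n)) (ω : Ω) : ℝ :=
  if h : A.Nonempty then A.inf' h fun i => T i ω else 0

/-- The signed domination function `d(A) = ∑_{B ⊆ A} (-1)^{|A|-|B|} φ(B)`. -/
noncomputable def signedDom {n : ℕ} (φ : Finset (Fin n) → ℝ) (A : Finset (Fin n)) : ℝ :=
  ∑ B ∈ A.powerset, (-1 : ℝ) ^ (A.card - B.card) * φ B

theorem sum_range_choose_div_choose (m s : ℕ) :
    ∑ k ∈ range (m + 1), (m.choose k : ℝ) / ((m + s + 1) * (m + s).choose (s + k)) =
      1 / (s + 1) := by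
  have hterm : ∀ k ∈ range (m + 1), (m.choose k : ℝ) / ((m + s + 1) * (m + s).choose (s + k)) =
      (k + s).choose s / ((m + s + 1) * (m + s).choose s) := by
    intro k hk
    have hkm : k ≤ m := Nat.lt_succ_iff.1 (mem_range.1 hk)
    have hmul := @Nat.choose_mul (m + s) (s + k) s (Nat.le_add_right s k)
    rw [Nat.add_sub_cancel, Nat.add_sub_cancel_left, add_comm s k] at hmul
    have hpos : (0 : ℝ) < (m + s).choose (k + s) := by
      exact_mod_cast Nat.choose_pos (by omega)
    have hpos' : (0 : ℝ) < (m + s).choose s := by exact_mod_cast Nat.choose_pos (by omega)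
    rw [add_comm s k, div_eq_div_iff (by positivity) (by positivity)]
    have := congrArg (Nat.cast : ℕ → ℝ) hmul
    push_cast at this
    linear_combination -(↑m + ↑s + 1) * this
  rw [sum_congr rfl hterm, ← sum_div]
  have hhockey := congrArg (Nat.cast : ℕ → ℝ) (Nat.sum_range_add_choose m s)
  have hpascal := congrArg (Nat.cast : ℕ → ℝ) (Nat.add_one_mul_choose_eq (m + s) s)
  push_cast at hhockey hpascal
  have hpos : (0 : ℝ) < (m + s + 1).choose (s + 1) := by exact_mod_cast Nat.choose_pos (by omega)
  rw [hhockey, hpascal, div_eq_div_iff (by positivity) (by positivity)]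
  ring

namespace Finset

theorem notMem_of_mem_powerset_erase {α : Type*} [DecidableEq α] {s t : Finset α} {a : α}
    (ht : t ∈ (s.erase a).powerset) : a ∉ t :=
  fun ha => notMem_erase a s (mem_powerset.1 ht ha)

theorem sum_Icc_eq_sum_powerset_sdiff {α β : Type*} [DecidableEq α] [AddCommMonoid β]
    {s t : Finset α} (h : s ⊆ t) (f : Finset α → β) :
    ∑ u ∈ Icc s t, f u = ∑ e ∈ (t \ s).powerset, f (s ∪ e) := by
  rw [Icc_eq_image_powerset h, sum_image]
  intro e₁ he₁ e₂ he₂ heq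
  have hd : ∀ e ∈ ((t \ s).powerset : Set (Finset α)), Disjoint s e := fun e he =>
    disjoint_of_subset_right (mem_powerset.1 he) disjoint_sdiff
  rw [← union_sdiff_cancel_left (hd e₁ he₁), ← union_sdiff_cancel_left (hd e₂ he₂)]
  exact congrArg (· \ s) heq

theorem sum_powerset_sum_Icc {α β : Type*} [DecidableEq α] [AddCommMonoid β]
    (t : Finset α) (f : Finset α → Finset α → β) :
    ∑ u ∈ t.powerset, ∑ s ∈ u.powerset, f u s = ∑ s ∈ t.powerset, ∑ u ∈ Icc s t, f u s :=
  sum_comm' fun u s => by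
    simp only [mem_powerset, mem_Icc]
    exact ⟨fun ⟨hu, hs⟩ => ⟨⟨hs, hu⟩, hs.trans hu⟩, fun ⟨⟨hs, hu⟩, _⟩ => ⟨hu, hs⟩⟩

theorem sum_Icc_neg_one_pow_card_sub {α : Type*} [DecidableEq α] {s t : Finset α}
    (h : s ⊆ t) :
    ∑ u ∈ Icc s t, (-1 : ℝ) ^ (#u - #s) = if s = t then 1 else 0 := by
  rw [sum_Icc_eq_sum_powerset_sdiff h]
  have hcard : ∀ e ∈ (t \ s).powerset, (-1 : ℝ) ^ (#(s ∪ e) - #s) = ((-1 : ℤ) ^ #e : ℤ) := by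
    intro e he
    rw [card_union_of_disjoint (disjoint_of_subset_right (mem_powerset.1 he) disjoint_sdiff)]
    push_cast
    rw [Nat.add_sub_cancel_left]
  have hempty : t \ s = ∅ ↔ s = t :=
    sdiff_eq_empty_iff_subset.trans ⟨h.antisymm, fun hst => hst ▸ subset_rfl⟩
  rw [sum_congr rfl hcard, ← Int.cast_sum, sum_powerset_neg_one_pow_card]
  simp only [hempty, apply_ite (Int.cast : ℤ → ℝ), Int.cast_one, Int.cast_zero]

theorem sum_Icc_one_div_mul_choose {α : Type*} [DecidableEq α] {t u : Finset α}
    (h : t ⊆ u) :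
    ∑ a ∈ Icc t u, 1 / ((#u + 1 : ℝ) * (#u).choose #a) = 1 / (#t + 1) := by
  have hu : #u = #(u \ t) + #t := by
    rw [card_sdiff_of_subset h, Nat.sub_add_cancel (card_le_card h)]
  rw [sum_Icc_eq_sum_powerset_sdiff h]
  have hcard : ∀ e ∈ (u \ t).powerset, 1 / ((#u + 1 : ℝ) * (#u).choose #(t ∪ e)) =
      1 / ((#u + 1 : ℝ) * (#u).choose (#t + #e)) := fun e he => by
    rw [card_union_of_disjoint (disjoint_of_subset_right (mem_powerset.1 he) disjoint_sdiff)]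
  rw [sum_congr rfl hcard,
    sum_powerset_apply_card fun k => 1 / ((#u + 1 : ℝ) * (#u).choose (#t + k))]
  simp only [nsmul_eq_mul, mul_one_div]
  rw [hu]
  push_cast
  exact sum_range_choose_div_choose _ _

end Finset

section SignedDomination

variable {n : ℕ} (φ : Finset (Fin n) → ℝ)

theorem sum_powerset_signedDom (t : Finset (Fin n)) :
    ∑ s ∈ t.powerset, signedDom φ s = φ t := by
  simp only [signedDom]
  rw [sum_powerset_sum_Icc]
  have hinner : ∀ s ∈ t.powerset,
      ∑ u ∈ Icc s t, (-1 : ℝ) ^ (#u - #s) * φ s = if s = t then φ s else 0 := by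
    intro s hs
    rw [← sum_mul, sum_Icc_neg_one_pow_card_sub (mem_powerset.1 hs), ite_mul, one_mul, zero_mul]
  rw [sum_congr rfl hinner, sum_ite_eq' _ _ φ, if_pos (mem_powerset_self t)]

theorem sub_eq_sum_powerset_signedDom_insert {j : Fin n} {A : Finset (Fin n)} (hj : j ∉ A) :
    φ (insert j A) - φ A = ∑ t ∈ A.powerset, signedDom φ (insert j t) := by
  rw [← sum_powerset_signedDom φ (insert j A), ← sum_powerset_signedDom φ A,
    sum_powerset_insert hj, add_sub_cancel_left]

theorem sum_sub_div_choose_eq_sum_signedDom_div (j : Fin n) :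
    ∑ A ∈ (univ.erase j).powerset, (φ (insert j A) - φ A) / (n * (n - 1).choose #A) =
      ∑ S ∈ univ.powerset.filter (fun S => j ∈ S), signedDom φ S / #S := by
  set U := univ.erase j
  have hUn : #U = n - 1 := by rw [card_erase_of_mem (mem_univ j), card_univ, Fintype.card_fin]
  have hn : (n : ℝ) = #U + 1 := by
    rw [hUn, Nat.cast_pred (Fin.pos j)]
    ring
  calc ∑ A ∈ U.powerset, (φ (insert j A) - φ A) / (n * (n - 1).choose #A)
      = ∑ A ∈ U.powerset, ∑ t ∈ A.powerset,
          signedDom φ (insert j t) * (1 / ((#U + 1 : ℝ) * (#U).choose #A)) := by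
        refine sum_congr rfl fun A hA => ?_
        rw [sub_eq_sum_powerset_signedDom_insert φ (notMem_of_mem_powerset_erase hA), ← sum_mul,
          hn, hUn, mul_one_div]
    _ = ∑ t ∈ U.powerset, ∑ A ∈ Icc t U,
          signedDom φ (insert j t) * (1 / ((#U + 1 : ℝ) * (#U).choose #A)) :=
        sum_powerset_sum_Icc _ _
    _ = ∑ t ∈ U.powerset, signedDom φ (insert j t) / #(insert j t) := by
        refine sum_congr rfl fun t ht => ?_
        rw [← mul_sum, sum_Icc_one_div_mul_choose (mem_powerset.1 ht),
          card_insert_of_notMem (notMem_of_mem_powerset_erase ht)]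
        push_cast
        ring
    _ = ∑ S ∈ univ.powerset.filter (fun S => j ∈ S), signedDom φ S / #S := by
        rw [sum_filter, ← insert_erase (mem_univ j), sum_powerset_insert (notMem_erase j univ),
          sum_eq_zero fun t ht => if_neg (notMem_of_mem_powerset_erase ht), zero_add]
        simp only [mem_insert_self, if_true]
        rfl

end SignedDomination

section Semicoherent

variable {n : ℕ} {φ : Finset (Fin n) → ℝ}

structure IsSemicoherent (φ : Finset (Fin n) → ℝ) : Prop where
  zero_or_one : ∀ A, φ A = 0 ∨ φ A = 1
  mono : Monotone φ
  map_empty : φ ∅ = 0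
  map_univ : φ univ = 1

namespace IsSemicoherent

theorem eq_one_iff_exists_subset (hφ : IsSemicoherent φ) (s : Finset (Fin n)) :
    φ s = 1 ↔ ∃ B ⊆ s, φ B = 1 :=
  ⟨fun h => ⟨s, subset_rfl, h⟩, fun ⟨B, hBs, hB⟩ =>
    (hφ.zero_or_one s).resolve_left fun h => by linarith [hφ.mono hBs]⟩

theorem nonempty_of_eq_one (hφ : IsSemicoherent φ) {B : Finset (Fin n)} (hB : φ B = 1) :
    B.Nonempty :=
  nonempty_iff_ne_empty.2 fun h => by simp [h, hφ.map_empty] at hB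

theorem sub_eq_ite (hφ : IsSemicoherent φ) {j : Fin n} {A : Finset (Fin n)} :
    φ (insert j A) - φ A = if φ (insert j A) = 1 ∧ φ A = 0 then 1 else 0 := by
  have hle := hφ.mono (subset_insert j A)
  rcases hφ.zero_or_one (insert j A) with h₁ | h₁ <;> rcases hφ.zero_or_one A with h₀ | h₀
  · simp [h₁, h₀]
  · norm_num [h₁, h₀] at hle
  · simp [h₁, h₀]
  · simp [h₁, h₀]

end IsSemicoherent

end Semicoherent

section SystemLifetime

variable {Ω : Type*} {n : ℕ} (T : Fin n → Ω → ℝ) {φ : Finset (Fin n) → ℝ}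

theorem sysLifeOn_univ_eq_sup' (hne : (univ.powerset.filter fun A => φ A = 1).Nonempty)
    (ω : Ω) :
    sysLifeOn T univ φ ω =
      (univ.powerset.filter fun A => φ A = 1).sup' hne (fun A => minLifeOn T A ω) := by
  rw [sysLifeOn, dif_pos hne]
  rfl

theorem le_minLifeOn_iff {A : Finset (Fin n)} (hA : A.Nonempty) (ω : Ω) (t : ℝ) :
    t ≤ minLifeOn T A ω ↔ ∀ i ∈ A, t ≤ T i ω := by
  rw [minLifeOn, dif_pos hA, le_inf'_iff]

theorem lt_minLifeOn_iff {A : Finset (Fin n)} (hA : A.Nonempty) (ω : Ω) (t : ℝ) :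
    t < minLifeOn T A ω ↔ ∀ i ∈ A, t < T i ω := by
  rw [minLifeOn, dif_pos hA, lt_inf'_iff]

theorem le_sysLifeOn_univ_iff (hφ : IsSemicoherent φ) (ω : Ω) (t : ℝ) :
    t ≤ sysLifeOn T univ φ ω ↔ φ (univ.filter fun i => t ≤ T i ω) = 1 := by
  rw [sysLifeOn_univ_eq_sup' T (filter_nonempty_iff.2 ⟨univ, mem_powerset_self _, hφ.map_univ⟩),
    le_sup'_iff, hφ.eq_one_iff_exists_subset]
  refine exists_congr fun B => ?_
  simp only [mem_filter, mem_powerset, subset_univ, true_and]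
  rw [and_comm]
  refine and_congr_left fun hB => ?_
  rw [le_minLifeOn_iff T (hφ.nonempty_of_eq_one hB)]
  simp [subset_iff]

theorem lt_sysLifeOn_univ_iff (hφ : IsSemicoherent φ) (ω : Ω) (t : ℝ) :
    t < sysLifeOn T univ φ ω ↔ φ (univ.filter fun i => t < T i ω) = 1 := by
  rw [sysLifeOn_univ_eq_sup' T (filter_nonempty_iff.2 ⟨univ, mem_powerset_self _, hφ.map_univ⟩),
    lt_sup'_iff, hφ.eq_one_iff_exists_subset]
  refine exists_congr fun B => ?_
  simp only [mem_filter, mem_powerset, subset_univ, true_and]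
  rw [and_comm]
  refine and_congr_left fun hB => ?_
  rw [lt_minLifeOn_iff T (hφ.nonempty_of_eq_one hB)]
  simp [subset_iff]

theorem sysLifeOn_univ_eq_iff (hφ : IsSemicoherent φ) (ω : Ω) (j : Fin n) :
    sysLifeOn T univ φ ω = T j ω ↔
      φ (univ.filter fun i => T j ω ≤ T i ω) = 1 ∧
        φ (univ.filter fun i => T j ω < T i ω) = 0 := by
  rw [eq_comm, le_antisymm_iff, ← not_lt (b := sysLifeOn T univ φ ω), le_sysLifeOn_univ_iff T hφ,
    lt_sysLifeOn_univ_iff T hφ]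
  refine and_congr_right fun _ => ?_
  rcases hφ.zero_or_one (univ.filter fun i => T j ω < T i ω) with h | h <;> simp [h]

end SystemLifetime

section Outliving

variable {Ω : Type*} {n : ℕ} (T : Fin n → Ω → ℝ) (j : Fin n)

noncomputable def outliving (ω : Ω) : Finset (Fin n) := univ.filter fun i => T j ω < T i ω

theorem notMem_outliving (ω : Ω) : j ∉ outliving T j ω := by simp [outliving]

theorem filter_le_eq_insert_outliving {ω : Ω} (h : ∀ i, i ≠ j → T i ω ≠ T j ω) :
    univ.filter (fun i => T j ω ≤ T i ω) = insert j (outliving T j ω) := by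
  ext i
  by_cases hij : i = j
  · simp [hij]
  · simp [outliving, hij, le_iff_lt_or_eq, (h i hij).symm]

theorem outliving_preimage_singleton (A : Finset (Fin n)) :
    outliving T j ⁻¹' {A} = {ω | (∀ i ∉ A, T i ω ≤ T j ω) ∧ ∀ i ∈ A, T j ω < T i ω} := by
  ext ω
  simp only [Set.mem_preimage, Set.mem_singleton_iff, Set.mem_ofPred_eq, Finset.ext_iff,
    outliving, mem_filter, mem_univ, true_and, ← not_lt]
  exact ⟨fun h => ⟨fun i => mt (h i).1, fun i => (h i).2⟩,
    fun ⟨h₁, h₂⟩ i => ⟨fun h => by_contra fun hi => h₁ i hi h, h₂ i⟩⟩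

variable [MeasurableSpace Ω]

theorem measurableSet_outliving_preimage_singleton (hT : ∀ i, Measurable (T i))
    (A : Finset (Fin n)) : MeasurableSet (outliving T j ⁻¹' {A}) := by
  rw [outliving_preimage_singleton]
  measurability

theorem relQual_eq_measure_outliving (μ : Measure Ω) (A : Finset (Fin n)) :
    relQual μ T j A = (μ (outliving T j ⁻¹' {A})).toReal := by
  rw [relQual, outliving_preimage_singleton]

end Outliving

theorem toReal_measure_sysLifeOn_eq_sum {Ω : Type*} [MeasurableSpace Ω] (μ : Measure Ω)
    [IsFiniteMeasure μ] {n : ℕ} (T : Fin n → Ω → ℝ) (hT : ∀ i, Measurable (T i))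
    {φ : Finset (Fin n) → ℝ} (hφ : IsSemicoherent φ) (j : Fin n)
    (hties : ∀ i, i ≠ j → μ {ω | T i ω = T j ω} = 0) :
    (μ {ω | sysLifeOn T univ φ ω = T j ω}).toReal =
      ∑ A ∈ (univ.erase j).powerset, (φ (insert j A) - φ A) * relQual μ T j A := by
  set pivotal := (univ.erase j).powerset.filter fun A => φ (insert j A) = 1 ∧ φ A = 0
  have hnoTies : ∀ᵐ ω ∂μ, ∀ i, i ≠ j → T i ω ≠ T j ω := by
    refine ae_all_iff.2 fun i => ?_
    by_cases hij : i = j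
    · exact ae_of_all _ fun _ h => absurd hij h
    · exact (measure_eq_zero_iff_ae_notMem.1 (hties i hij)).mono fun _ h _ => h
  have hae : {ω | sysLifeOn T univ φ ω = T j ω} =ᵐ[μ] outliving T j ⁻¹' pivotal := by
    rw [Filter.eventuallyEq_set]
    filter_upwards [hnoTies] with ω hω
    have hsub : outliving T j ω ⊆ univ.erase j :=
      subset_erase.2 ⟨subset_univ _, notMem_outliving T j ω⟩
    simp only [Set.mem_preimage, mem_coe, pivotal, mem_filter,
      mem_powerset, sysLifeOn_univ_eq_iff T hφ, filter_le_eq_insert_outliving T j hω,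
      hsub, true_and]
    rfl
  rw [measure_congr hae, ← sum_measure_preimage_singleton _
      fun A _ => measurableSet_outliving_preimage_singleton T j hT A,
    ENNReal.toReal_sum fun _ _ => measure_ne_top _ _, sum_filter]
  refine sum_congr rfl fun A _ => ?_
  rw [hφ.sub_eq_ite, relQual_eq_measure_outliving, ite_mul, one_mul, zero_mul]

theorem stmt_13_general {Ω : Type*} [MeasurableSpace Ω] (μ : Measure Ω) [IsProbabilityMeasure μ]
    {n : ℕ} (T : Fin n → Ω → ℝ) (hTmeas : ∀ i, Measurable (T i))
    (hties : ∀ i j : Fin n, i ≠ j → μ {ω | T i ω = T j ω} = 0)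
    (φ : Finset (Fin n) → ℝ)
    (hφ01 : ∀ A, φ A = 0 ∨ φ A = 1)
    (hφmono : ∀ A B : Finset (Fin n), A ⊆ B → φ A ≤ φ B)
    (hφempty : φ ∅ = 0) (hφfull : φ Finset.univ = 1)
    (hq : ∀ (j : Fin n) (A : Finset (Fin n)), j ∉ A →
      relQual μ T j A = 1 / ((n : ℝ) * ((n - 1).choose A.card : ℕ)))
    (j : Fin n) :
    (μ {ω | sysLifeOn T Finset.univ φ ω = T j ω}).toReal =
      ∑ A ∈ (Finset.univ : Finset (Fin n)).powerset.filter (fun A => j ∈ A),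
        signedDom φ A / (A.card : ℝ) := by
  have hφ : IsSemicoherent φ := ⟨hφ01, fun A B h => hφmono A B h, hφempty, hφfull⟩
  rw [toReal_measure_sysLifeOn_eq_sum μ T hTmeas hφ j fun i hi => hties i j hi,
    ← sum_sub_div_choose_eq_sum_signedDom_div]
  refine sum_congr rfl fun A hA => ?_
  rw [hq j A (notMem_of_mem_powerset_erase hA), mul_one_div]

theorem stmt_13 {Ω : Type*} [MeasurableSpace Ω] (μ : Measure Ω) [IsProbabilityMeasure μ]
    {n : ℕ} (T : Fin n → Ω → ℝ) (hTmeas : ∀ i, Measurable (T i))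
    (hTnonneg : ∀ i ω, 0 ≤ T i ω)
    (hties : ∀ i j : Fin n, i ≠ j → μ {ω | T i ω = T j ω} = 0)
    (φ : Finset (Fin n) → ℝ)
    (hφ01 : ∀ A, φ A = 0 ∨ φ A = 1)
    (hφmono : ∀ A B : Finset (Fin n), A ⊆ B → φ A ≤ φ B)
    (hφempty : φ ∅ = 0) (hφfull : φ Finset.univ = 1)
    (hq : ∀ (j : Fin n) (A : Finset (Fin n)), j ∉ A →
      relQual μ T j A = 1 / ((n : ℝ) * ((n - 1).choose A.card : ℕ)))
    (j : Fin n) :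
    (μ {ω | sysLifeOn T Finset.univ φ ω = T j ω}).toReal =
      ∑ A ∈ (Finset.univ : Finset (Fin n)).powerset.filter (fun A => j ∈ A),
        signedDom φ A / (A.card : ℝ) :=
  stmt_13_general μ T hTmeas hties φ hφ01 hφmono hφempty hφfull hq j
end

section
/- If (M,χ) is a module of the system with organizing structure ψ, then Pr(T_C = T_M) = ∑_{A⊆C∖M} q_[M](A)·Δ_[M]ψ(A). -/
/-
Away from the null set of ties, put `m = T_M` and let `B ⊆ C∖M` be the set of components outside
the module that outlive it. The lifetime of a semicoherent system equals `m` iff the components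
alive at time `m` form a path set while those alive strictly after `m` do not. Through the modular
decomposition these two sets become `B ∪ {[M]}` and `B` for `ψ`, so `1{T_C = T_M} = Δ_[M]ψ(B)`.
The events `{B is the set of outside survivors of the module}`, `B ⊆ C∖M`, partition the sample
space almost surely, and taking expectations gives the formula.
-/

open MeasureTheory Finset

structure IsSemicoherentOn {α : Type*} (χ : Finset α → ℝ) (D : Finset α) : Prop where
  eq_zero_or_eq_one : ∀ A ⊆ D, χ A = 0 ∨ χ A = 1
  mono : ∀ A B, A ⊆ B → B ⊆ D → χ A ≤ χ B
  empty : χ ∅ = 0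
  full : χ D = 1

namespace IsSemicoherentOn

variable {α : Type*} {χ : Finset α → ℝ} {D : Finset α}

theorem nonempty_of_eq_one (hχ : IsSemicoherentOn χ D) {A : Finset α} (hA : χ A = 1) :
    A.Nonempty := by
  rw [nonempty_iff_ne_empty]
  rintro rfl
  simp [hχ.empty] at hA

theorem exists_subset_forall_iff (hχ : IsSemicoherentOn χ D) (p : α → Prop) [DecidablePred p] :
    (∃ A ⊆ D, χ A = 1 ∧ ∀ i ∈ A, p i) ↔ χ (D.filter p) = 1 := by
  refine ⟨fun ⟨A, hAD, hA, hpA⟩ => ?_,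
    fun h => ⟨_, filter_subset _ _, h, fun i hi => (mem_filter.1 hi).2⟩⟩
  have hle := hχ.mono A _ (fun i hi => mem_filter.2 ⟨hAD hi, hpA i hi⟩) (filter_subset _ _)
  rcases hχ.eq_zero_or_eq_one _ (filter_subset p D) with h0 | h1
  · linarith
  · exact h1

end IsSemicoherentOn

section Lifetime

variable {Ω : Type*} {n : ℕ} {T : Fin n → Ω → ℝ} {D : Finset (Fin n)} {χ : Finset (Fin n) → ℝ}

theorem sysLifeOn_eq_sup' (hχ : IsSemicoherentOn χ D) (ω : Ω) :
    ∃ h, sysLifeOn T D χ ω = (D.powerset.filter fun A => χ A = 1).sup' h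
      (fun A => if hA : A.Nonempty then A.inf' hA fun i => T i ω else 0) := by
  have h : (D.powerset.filter fun A => χ A = 1).Nonempty := ⟨D, by simp [hχ.full]⟩
  exact ⟨h, dif_pos h⟩

theorem le_sysLifeOn_iff (hχ : IsSemicoherentOn χ D) (ω : Ω) (t : ℝ) :
    t ≤ sysLifeOn T D χ ω ↔ χ (D.filter fun i => t ≤ T i ω) = 1 := by
  obtain ⟨h, hL⟩ := sysLifeOn_eq_sup' (T := T) hχ ω
  rw [hL, le_sup'_iff, ← hχ.exists_subset_forall_iff]
  refine exists_congr fun A => ?_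
  simp only [mem_filter, mem_powerset, and_assoc]
  refine and_congr_right fun _ => and_congr_right fun hA => ?_
  rw [dif_pos (hχ.nonempty_of_eq_one hA), le_inf'_iff]

theorem lt_sysLifeOn_iff (hχ : IsSemicoherentOn χ D) (ω : Ω) (t : ℝ) :
    t < sysLifeOn T D χ ω ↔ χ (D.filter fun i => t < T i ω) = 1 := by
  obtain ⟨h, hL⟩ := sysLifeOn_eq_sup' (T := T) hχ ω
  rw [hL, lt_sup'_iff, ← hχ.exists_subset_forall_iff]
  refine exists_congr fun A => ?_
  simp only [mem_filter, mem_powerset, and_assoc]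
  refine and_congr_right fun _ => and_congr_right fun hA => ?_
  rw [dif_pos (hχ.nonempty_of_eq_one hA), lt_inf'_iff]

theorem sysLifeOn_eq_iff (hχ : IsSemicoherentOn χ D) (ω : Ω) (t : ℝ) :
    sysLifeOn T D χ ω = t ↔
      χ (D.filter fun i => t ≤ T i ω) = 1 ∧ χ (D.filter fun i => t < T i ω) = 0 := by
  rw [eq_comm, eq_iff_le_not_lt, le_sysLifeOn_iff hχ, lt_sysLifeOn_iff hχ]
  refine and_congr_right fun _ => ?_
  rcases hχ.eq_zero_or_eq_one _ (filter_subset (fun i => t < T i ω) D) with h | h <;> simp [h]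

theorem exists_mem_sysLifeOn_eq (hχ : IsSemicoherentOn χ D) (ω : Ω) :
    ∃ j ∈ D, sysLifeOn T D χ ω = T j ω := by
  obtain ⟨h, hL⟩ := sysLifeOn_eq_sup' (T := T) hχ ω
  obtain ⟨A, hA, hLA⟩ := exists_mem_eq_sup' h
    (fun A => if hA : A.Nonempty then A.inf' hA fun i => T i ω else 0)
  rw [mem_filter, mem_powerset] at hA
  have hAne := hχ.nonempty_of_eq_one hA.2
  obtain ⟨j, hj, hjA⟩ := exists_mem_eq_inf' hAne fun i => T i ω
  exact ⟨j, hA.1 hj, by rw [hL, hLA, dif_pos hAne, hjA]⟩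

theorem measurable_sysLifeOn [MeasurableSpace Ω] (hT : ∀ i, Measurable (T i)) :
    Measurable (sysLifeOn T D χ) := by
  unfold sysLifeOn
  split_ifs with h
  · have hmin (A : Finset (Fin n)) (hA : A.Nonempty) : Measurable (A.inf' hA T) :=
      inf'_induction hA _ (fun _ hf _ hg => hf.inf hg) fun i _ => hT i
    have hsup := measurable_sup' h fun A _ =>
      (show Measurable fun ω => if hA : A.Nonempty then A.inf' hA T ω else 0 by
        split_ifs with hA
        exacts [hmin A hA, measurable_const])
    convert hsup using 1
    ext ω
    simp only [Finset.sup'_apply, Finset.inf'_apply]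
  · exact measurable_const

end Lifetime

theorem eq_filter_lt_iff {α : Type*} [Fintype α] [DecidableEq α] {M B : Finset α} {x : α → ℝ}
    {m : ℝ} (hB : B ⊆ univ \ M) (hm : ∀ i ∉ M, x i ≠ m) :
    B = (univ \ M).filter (fun i => m < x i) ↔
      (∀ i, i ∉ M → i ∉ B → x i < m) ∧ ∀ i ∈ B, m < x i := by
  constructor
  · rintro rfl
    simp only [mem_filter, mem_sdiff, mem_univ, true_and, not_and, not_lt]
    exact ⟨fun i hi hle => (hle hi).lt_of_ne (hm i hi), fun i hi => hi.2⟩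
  · rintro ⟨hlt, hgt⟩
    ext i
    simp only [mem_filter, mem_sdiff, mem_univ, true_and]
    refine ⟨fun hi => ⟨(mem_sdiff.1 (hB hi)).2, hgt i hi⟩, fun ⟨hiM, hi⟩ => ?_⟩
    by_contra hiB
    exact (hlt i hiM hiB).not_gt hi

theorem ae_injective_of_measure_eq_zero {Ω ι β : Type*} [MeasurableSpace Ω] {μ : Measure Ω}
    [Countable ι] {T : ι → Ω → β} (hties : ∀ i j, i ≠ j → μ {ω | T i ω = T j ω} = 0) :
    ∀ᵐ ω ∂μ, Function.Injective fun i => T i ω := by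
  refine ae_all_iff.2 fun i => ae_all_iff.2 fun j => ?_
  by_cases hij : i = j
  · exact ae_of_all _ fun _ _ => hij
  · filter_upwards [measure_eq_zero_iff_ae_notMem.1 (hties i j hij)] with ω hω h
    exact (hω h).elim

theorem measureReal_eq_sum_of_indicator_ae_eq {Ω ι : Type*} [MeasurableSpace Ω] {μ : Measure Ω}
    [IsFiniteMeasure μ] {S : Set Ω} {E : ι → Set Ω} {s : Finset ι} {c : ι → ℝ}
    (hS : MeasurableSet S) (hE : ∀ i ∈ s, MeasurableSet (E i))
    (h : ∀ᵐ ω ∂μ, S.indicator 1 ω = ∑ i ∈ s, (E i).indicator 1 ω * c i) :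
    μ.real S = ∑ i ∈ s, μ.real (E i) * c i := by
  rw [← integral_indicator_one hS, integral_congr_ae h, integral_finsetSum]
  · exact sum_congr rfl fun i hi => by rw [integral_mul_const, integral_indicator_one (hE i hi)]
  · exact fun i hi => ((integrable_const 1).indicator (hE i hi)).mul_const _

section Module

variable {Ω : Type*} {n : ℕ} {T : Fin n → Ω → ℝ} {M : Finset (Fin n)}
  {φ χ : Finset (Fin n) → ℝ} {ψ : Finset (Fin n) → Bool → ℝ}

theorem sysLifeOn_univ_eq_iff_of_module (hφ : IsSemicoherentOn φ univ)
    (hχ : IsSemicoherentOn χ M)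
    (hmod : ∀ A, φ A = ψ (A \ M) (if χ (A ∩ M) = 1 then true else false)) {ω : Ω}
    (hm : ∀ i ∉ M, T i ω ≠ sysLifeOn T M χ ω) :
    sysLifeOn T univ φ ω = sysLifeOn T M χ ω ↔
      ψ ((univ \ M).filter fun i => sysLifeOn T M χ ω < T i ω) true = 1 ∧
        ψ ((univ \ M).filter fun i => sysLifeOn T M χ ω < T i ω) false = 0 := by
  set m := sysLifeOn T M χ ω
  obtain ⟨hle, hlt⟩ := (sysLifeOn_eq_iff hχ ω m).1 rfl
  have hle_sdiff :
      (univ.filter fun i => m ≤ T i ω) \ M = (univ \ M).filter fun i => m < T i ω := by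
    ext i
    simp only [mem_sdiff, mem_filter, mem_univ, true_and]
    exact ⟨fun ⟨h, hi⟩ => ⟨hi, h.lt_of_ne (hm i hi).symm⟩, fun ⟨hi, h⟩ => ⟨h.le, hi⟩⟩
  have hlt_sdiff :
      (univ.filter fun i => m < T i ω) \ M = (univ \ M).filter fun i => m < T i ω := by
    ext i
    simp only [mem_sdiff, mem_filter, mem_univ, true_and]
    tauto
  rw [sysLifeOn_eq_iff hφ, hmod, hmod, hle_sdiff, hlt_sdiff, filter_inter, filter_inter,
    univ_inter, hle, hlt]
  simp

theorem indicator_sysLifeOn_eq_sum_of_module (hφ : IsSemicoherentOn φ univ)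
    (hχ : IsSemicoherentOn χ M)
    (hmod : ∀ A, φ A = ψ (A \ M) (if χ (A ∩ M) = 1 then true else false))
    (hψ01 : ∀ B b, B ⊆ univ \ M → ψ B b = 0 ∨ ψ B b = 1)
    (hψmono : ∀ B ⊆ univ \ M, ψ B false ≤ ψ B true) {ω : Ω}
    (hinj : Function.Injective fun i => T i ω) :
    {ω | sysLifeOn T univ φ ω = sysLifeOn T M χ ω}.indicator 1 ω =
      ∑ B ∈ (univ \ M).powerset,
        {ω | (∀ i, i ∉ M → i ∉ B → T i ω < sysLifeOn T M χ ω) ∧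
            ∀ i ∈ B, sysLifeOn T M χ ω < T i ω}.indicator 1 ω * (ψ B true - ψ B false) := by
  set B₀ := (univ \ M).filter fun i => sysLifeOn T M χ ω < T i ω with hB₀_def
  have hB₀ : B₀ ⊆ univ \ M := filter_subset _ _
  obtain ⟨j, hj, hjω⟩ := exists_mem_sysLifeOn_eq (T := T) hχ ω
  have hm : ∀ i ∉ M, T i ω ≠ sysLifeOn T M χ ω := fun i hi h => hi (hinj (h.trans hjω) ▸ hj)
  simp only [Set.indicator_apply, Set.mem_ofPred_eq, Pi.one_apply]
  rw [sum_eq_single_of_mem B₀ (mem_powerset.2 hB₀), if_pos ((eq_filter_lt_iff hB₀ hm).1 rfl),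
    one_mul]
  · simp only [sysLifeOn_univ_eq_iff_of_module hφ hχ hmod hm, ← hB₀_def]
    have := hψmono B₀ hB₀
    rcases hψ01 B₀ true hB₀ with h1 | h1 <;> rcases hψ01 B₀ false hB₀ with h0 | h0 <;>
      simp [h1, h0] at this ⊢
    linarith
  · intro B hB hne
    rw [if_neg fun h => hne ((eq_filter_lt_iff (mem_powerset.1 hB) hm).2 h), zero_mul]

end Module

/- In the statements about modules, a subset of the reduced component set
`C_M = (C∖M) ∪ {[M]}` is encoded as a pair consisting of a `Finset (Fin n)`
(its part in `C∖M`) and a `Bool` recording whether the macro-component `[M]`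
belongs to it; thus the organizing structure is `ψ : Finset (Fin n) → Bool → ℝ`,
and `Δ_[M]ψ(B) = ψ B true - ψ B false`. -/
theorem stmt_14_general {Ω : Type*} [MeasurableSpace Ω] (μ : Measure Ω) [IsProbabilityMeasure μ]
    {n : ℕ} (T : Fin n → Ω → ℝ) (hTmeas : ∀ i, Measurable (T i))
    (hties : ∀ i j : Fin n, i ≠ j → μ {ω | T i ω = T j ω} = 0)
    (φ : Finset (Fin n) → ℝ)
    (hφ01 : ∀ A, φ A = 0 ∨ φ A = 1)
    (hφmono : ∀ A B : Finset (Fin n), A ⊆ B → φ A ≤ φ B)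
    (hφempty : φ ∅ = 0) (hφfull : φ Finset.univ = 1)
    (M : Finset (Fin n))
    (χ : Finset (Fin n) → ℝ) (ψ : Finset (Fin n) → Bool → ℝ)
    (hχ01 : ∀ A, A ⊆ M → χ A = 0 ∨ χ A = 1)
    (hχmono : ∀ A B : Finset (Fin n), A ⊆ B → B ⊆ M → χ A ≤ χ B)
    (hχempty : χ ∅ = 0) (hχfull : χ M = 1)
    (hψ01 : ∀ B b, B ⊆ Finset.univ \ M → ψ B b = 0 ∨ ψ B b = 1)
    (hψmono : ∀ (B B' : Finset (Fin n)) (b b' : Bool), B ⊆ B' → B' ⊆ Finset.univ \ M →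
      (b = true → b' = true) → ψ B b ≤ ψ B' b')
    (hmod : ∀ A : Finset (Fin n),
      φ A = ψ (A \ M) (if χ (A ∩ M) = 1 then true else false)) :
    (μ {ω | sysLifeOn T Finset.univ φ ω = sysLifeOn T M χ ω}).toReal =
      ∑ B ∈ ((Finset.univ : Finset (Fin n)) \ M).powerset,
        (μ {ω | (∀ i, i ∉ M → i ∉ B → T i ω < sysLifeOn T M χ ω) ∧
              ∀ i ∈ B, sysLifeOn T M χ ω < T i ω}).toReal *
          (ψ B true - ψ B false) := by
  have hφ : IsSemicoherentOn φ univ :=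
    ⟨fun A _ => hφ01 A, fun A B hAB _ => hφmono A B hAB, hφempty, hφfull⟩
  have hχ : IsSemicoherentOn χ M := ⟨hχ01, hχmono, hχempty, hχfull⟩
  have hTM : Measurable (sysLifeOn T M χ) := measurable_sysLifeOn hTmeas
  refine measureReal_eq_sum_of_indicator_ae_eq
    (measurableSet_eq_fun (measurable_sysLifeOn hTmeas) hTM) (fun B _ => by measurability) ?_
  filter_upwards [ae_injective_of_measure_eq_zero hties] with ω hinj
  exact indicator_sysLifeOn_eq_sum_of_module hφ hχ hmod hψ01
    (fun B hB => hψmono B B false true le_rfl hB fun _ => rfl) hinj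

theorem stmt_14 {Ω : Type*} [MeasurableSpace Ω] (μ : Measure Ω) [IsProbabilityMeasure μ]
    {n : ℕ} (T : Fin n → Ω → ℝ) (hTmeas : ∀ i, Measurable (T i))
    (hTnonneg : ∀ i ω, 0 ≤ T i ω)
    (hties : ∀ i j : Fin n, i ≠ j → μ {ω | T i ω = T j ω} = 0)
    (φ : Finset (Fin n) → ℝ)
    (hφ01 : ∀ A, φ A = 0 ∨ φ A = 1)
    (hφmono : ∀ A B : Finset (Fin n), A ⊆ B → φ A ≤ φ B)
    (hφempty : φ ∅ = 0) (hφfull : φ Finset.univ = 1)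
    (M : Finset (Fin n)) (hM : M.Nonempty)
    (χ : Finset (Fin n) → ℝ) (ψ : Finset (Fin n) → Bool → ℝ)
    (hχ01 : ∀ A, A ⊆ M → χ A = 0 ∨ χ A = 1)
    (hχmono : ∀ A B : Finset (Fin n), A ⊆ B → B ⊆ M → χ A ≤ χ B)
    (hχempty : χ ∅ = 0) (hχfull : χ M = 1)
    (hψ01 : ∀ B b, B ⊆ Finset.univ \ M → ψ B b = 0 ∨ ψ B b = 1)
    (hψmono : ∀ (B B' : Finset (Fin n)) (b b' : Bool), B ⊆ B' → B' ⊆ Finset.univ \ M →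
      (b = true → b' = true) → ψ B b ≤ ψ B' b')
    (hψempty : ψ ∅ false = 0) (hψfull : ψ (Finset.univ \ M) true = 1)
    (hmod : ∀ A : Finset (Fin n),
      φ A = ψ (A \ M) (if χ (A ∩ M) = 1 then true else false)) :
    (μ {ω | sysLifeOn T Finset.univ φ ω = sysLifeOn T M χ ω}).toReal =
      ∑ B ∈ ((Finset.univ : Finset (Fin n)) \ M).powerset,
        (μ {ω | (∀ i, i ∉ M → i ∉ B → T i ω < sysLifeOn T M χ ω) ∧
              ∀ i ∈ B, sysLifeOn T M χ ω < T i ω}).toReal *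
          (ψ B true - ψ B false) :=
  stmt_14_general μ T hTmeas hties φ hφ01 hφmono hφempty hφfull M χ ψ hχ01 hχmono hχempty hχfull
    hψ01 hψmono hmod
end

section
/- Let (M,χ) be a module of the system with structure function φ(A) = ψ((A∖M) ∪ S), S = {[M]} if χ(A∩M)=1 and S = ∅ otherwise. Then for every j ∈ M, every A ⊆ M∖{j}, and every B ⊆ C∖M, one has Δ_jφ(A∪B) = Δ_[M]ψ(B) · Δ_jχ(A). -/
open Finset

/- On sets `A ∪ B` with `A ⊆ M` and `B ⊆ C∖M` the decomposition reads `φ (A ∪ B) = ψ B (χ A)`.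
A function `f : Bool → ℝ` read at `x ∈ {0,1}` is the affine `f false + (f true - f false) * x`,
so a difference of two such values factors as `Δ_[M]ψ(B) · Δ_jχ(A)`. -/

theorem apply_ite_eq_one_eq_add_mul (f : Bool → ℝ) {x : ℝ} (hx : x = 0 ∨ x = 1) :
    f (if x = 1 then true else false) = f false + (f true - f false) * x := by
  rcases hx with rfl | rfl <;> norm_num

theorem Finset.union_sdiff_eq_right_of_subset_of_disjoint {α : Type*} [DecidableEq α]
    {A B M : Finset α} (hA : A ⊆ M) (hB : Disjoint B M) : (A ∪ B) \ M = B := by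
  rw [union_sdiff_distrib, sdiff_eq_empty_iff_subset.2 hA, hB.sdiff_eq_left, empty_union]

theorem Finset.union_inter_eq_left_of_subset_of_disjoint {α : Type*} [DecidableEq α]
    {A B M : Finset α} (hA : A ⊆ M) (hB : Disjoint B M) : (A ∪ B) ∩ M = A := by
  rw [union_inter_distrib_right, inter_eq_left.2 hA, disjoint_iff_inter_eq_empty.1 hB, union_empty]

theorem apply_union_eq_of_module {α : Type*} [DecidableEq α] {φ χ : Finset α → ℝ}
    {ψ : Finset α → Bool → ℝ} {M : Finset α}
    (hmod : ∀ A : Finset α, φ A = ψ (A \ M) (if χ (A ∩ M) = 1 then true else false))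
    {A B : Finset α} (hA : A ⊆ M) (hB : Disjoint B M) :
    φ (A ∪ B) = ψ B (if χ A = 1 then true else false) := by
  rw [hmod, union_sdiff_eq_right_of_subset_of_disjoint hA hB,
    union_inter_eq_left_of_subset_of_disjoint hA hB]

/- A subset of the reduced component set `C_M = (C∖M) ∪ {[M]}` is encoded as a pair
consisting of a `Finset (Fin n)` (its part in `C∖M`) and a `Bool` recording whether the
macro-component `[M]` belongs to it; the organizing structure is `ψ : Finset (Fin n) → Bool → ℝ`,
and `Δ_[M]ψ(B) = ψ B true - ψ B false`. -/
theorem stmt_16_general {n : ℕ} (φ : Finset (Fin n) → ℝ)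
    (M : Finset (Fin n))
    (χ : Finset (Fin n) → ℝ) (ψ : Finset (Fin n) → Bool → ℝ)
    (hχ01 : ∀ A, A ⊆ M → χ A = 0 ∨ χ A = 1)
    (hmod : ∀ A : Finset (Fin n),
      φ A = ψ (A \ M) (if χ (A ∩ M) = 1 then true else false)) :
    ∀ j ∈ M, ∀ A ⊆ M \ {j}, ∀ B ⊆ Finset.univ \ M,
      φ (insert j (A ∪ B)) - φ (A ∪ B) =
        (ψ B true - ψ B false) * (χ (insert j A) - χ A) := by
  intro j hj A hA B hB
  have hAM : A ⊆ M := hA.trans sdiff_subset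
  have hjAM : insert j A ⊆ M := insert_subset hj hAM
  have hBM : Disjoint B M := (subset_sdiff.1 hB).2
  rw [← insert_union, apply_union_eq_of_module hmod hjAM hBM, apply_union_eq_of_module hmod hAM hBM,
    apply_ite_eq_one_eq_add_mul (ψ B) (hχ01 _ hjAM),
    apply_ite_eq_one_eq_add_mul (ψ B) (hχ01 _ hAM)]
  ring

theorem stmt_16 {n : ℕ} (φ : Finset (Fin n) → ℝ)
    (hφ01 : ∀ A, φ A = 0 ∨ φ A = 1)
    (hφmono : ∀ A B : Finset (Fin n), A ⊆ B → φ A ≤ φ B)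
    (hφempty : φ ∅ = 0) (hφfull : φ Finset.univ = 1)
    (M : Finset (Fin n)) (hM : M.Nonempty)
    (χ : Finset (Fin n) → ℝ) (ψ : Finset (Fin n) → Bool → ℝ)
    (hχ01 : ∀ A, A ⊆ M → χ A = 0 ∨ χ A = 1)
    (hχmono : ∀ A B : Finset (Fin n), A ⊆ B → B ⊆ M → χ A ≤ χ B)
    (hχempty : χ ∅ = 0) (hχfull : χ M = 1)
    (hψ01 : ∀ B b, B ⊆ Finset.univ \ M → ψ B b = 0 ∨ ψ B b = 1)
    (hψmono : ∀ (B B' : Finset (Fin n)) (b b' : Bool), B ⊆ B' → B' ⊆ Finset.univ \ M →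
      (b = true → b' = true) → ψ B b ≤ ψ B' b')
    (hψempty : ψ ∅ false = 0) (hψfull : ψ (Finset.univ \ M) true = 1)
    (hmod : ∀ A : Finset (Fin n),
      φ A = ψ (A \ M) (if χ (A ∩ M) = 1 then true else false)) :
    ∀ j ∈ M, ∀ A ⊆ M \ {j}, ∀ B ⊆ Finset.univ \ M,
      φ (insert j (A ∪ B)) - φ (A ∪ B) =
        (ψ B true - ψ B false) * (χ (insert j A) - χ A) :=
  stmt_16_general φ M χ ψ hχ01 hmod
end

section
/- Let (M,χ) be a module of the system. Assume that q_j(A∪B)/q_j^M(A) = q_{j'}(A'∪B)/q_{j'}^M(A') for all j, j' ∈ M, all A ⊆ M∖{j} and A' ⊆ M∖{j'} with |A| = |A'|, q_j^M(A) ≠ 0 and q_{j'}^M(A') ≠ 0, and all B ⊆ C∖M. Then for every k ∈ {1,…,m}, every j ∈ M, and every A ⊆ M∖{j} with |A| = m−k and q_j^M(A) ≠ 0, one has p_M^{(k)} = p_k^M · ∑_{B⊆C∖M} (q_j(A∪B)/q_j^M(A)) · Δ_[M]ψ(B). -/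
/-!
Off the null set where two lifetimes tie, `T_C = T_{k:M}` happens exactly when some `j ∈ M`
is pivotal for `φ` at the set `U` of components outliving it, with `|U ∩ M| = m - k`. These
events are disjoint and the one for `(j, U)` has probability `q_j(U)`, so
`p_M^{(k)} = ∑_{j ∈ M} ∑_{|U ∩ M| = m - k} q_j(U) (φ(U + j) - φ(U))`, and in the same way
`p_k^M = ∑_{j ∈ M} ∑_{A ⊆ M, |A| = m - k} q_j^M(A) (χ(A + j) - χ(A))`.
Write `U = A' ∪ B` with `A' ⊆ M` and `B ⊆ C ∖ M`. The module property gives the pivotal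
decomposition `φ(A' ∪ B + j) - φ(A' ∪ B) = (χ(A' + j) - χ(A')) Δ_[M]ψ(B)`, and the ratio
hypothesis gives `q_j(A' ∪ B) = q_j^M(A') q_{j₀}(A₀ ∪ B) / q_{j₀}^M(A₀)` for the pair
`(j₀, A₀)` fixed in the conclusion (both sides vanish when `q_j^M(A') = 0`). Hence the double
sum factors.
-/

open MeasureTheory Finset

/-- The relative quality function of component `j` within the module `(M,χ)`:
`q_j^M(A) = Pr(max_{i ∈ M∖A} T_i = T_j < min_{i ∈ A} T_i)`. -/
noncomputable def relQualMod {Ω : Type*} [MeasurableSpace Ω] {n : ℕ} (μ : Measure Ω)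
    (T : Fin n → Ω → ℝ) (M : Finset (Fin n)) (j : Fin n) (A : Finset (Fin n)) : ℝ :=
  (μ {ω | (∀ i ∈ M, i ∉ A → T i ω ≤ T j ω) ∧ ∀ i ∈ A, T j ω < T i ω}).toReal

lemma filter_le_eq_insert_filter_lt {ι β : Type*} [DecidableEq ι] [LinearOrder β] {g : ι → β}
    {s : Finset ι} (hg : Set.InjOn g s) {j : ι} (hj : j ∈ s) :
    {i ∈ s | g j ≤ g i} = insert j {i ∈ s | g j < g i} := by
  ext i
  simp only [mem_filter, mem_insert, le_iff_lt_or_eq]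
  constructor
  · rintro ⟨hi, hlt | heq⟩
    · exact Or.inr ⟨hi, hlt⟩
    · exact Or.inl (hg hi hj heq.symm)
  · rintro (rfl | ⟨hi, hlt⟩)
    · exact ⟨hj, Or.inr rfl⟩
    · exact ⟨hi, Or.inl hlt⟩

lemma apply_eq_of_card_filter_lt_eq {ι β : Type*} [LinearOrder β] {g : ι → β} {s : Finset ι}
    {a b : ι} (ha : a ∈ s) (hb : b ∈ s)
    (h : #{i ∈ s | g a < g i} = #{i ∈ s | g b < g i}) : g a = g b := by
  have card_lt : ∀ {a b}, b ∈ s → g a < g b → #{i ∈ s | g b < g i} < #{i ∈ s | g a < g i} :=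
    fun hb hab => card_lt_card <|
      (ssubset_iff_of_subset (monotone_filter_right s fun _ _ => hab.trans)).mpr
        ⟨_, mem_filter.mpr ⟨hb, hab⟩, by simp⟩
  rcases lt_trichotomy (g a) (g b) with hab | hab | hab
  · exact absurd h (card_lt hb hab).ne'
  · exact hab
  · exact absurd h (card_lt ha hab).ne

lemma card_filter_lt_orderEmbOfFin {α : Type*} [LinearOrder α] (s : Finset α) {m : ℕ}
    (h : #s = m) (i : Fin m) : #{x ∈ s | s.orderEmbOfFin h i < x} = m - 1 - i := by
  have : {x ∈ s | s.orderEmbOfFin h i < x} = (Ioi i).map (s.orderEmbOfFin h).toEmbedding := by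
    ext x
    simp only [mem_filter, mem_map, mem_Ioi, RelEmbedding.coe_toEmbedding]
    constructor
    · rintro ⟨hx, hlt⟩
      obtain ⟨a, rfl⟩ : x ∈ Set.range (s.orderEmbOfFin h) := by simpa using hx
      exact ⟨a, (s.orderEmbOfFin h).lt_iff_lt.mp hlt, rfl⟩
    · rintro ⟨a, hia, rfl⟩
      exact ⟨orderEmbOfFin_mem s h a, (s.orderEmbOfFin h).lt_iff_lt.mpr hia⟩
  rw [this, card_map, Fin.card_Ioi]

lemma sum_powerset_union {ι β : Type*} [DecidableEq ι] [AddCommMonoid β] {s t : Finset ι}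
    (h : Disjoint s t) (g : Finset ι → β) :
    ∑ U ∈ (s ∪ t).powerset, g U = ∑ A ∈ s.powerset, ∑ B ∈ t.powerset, g (A ∪ B) := by
  rw [← sum_product']
  refine sum_nbij' (fun U => (U ∩ s, U ∩ t)) (fun p => p.1 ∪ p.2) ?_ ?_ ?_ ?_ ?_
  · intro U _
    simp [inter_subset_right]
  · rintro ⟨A, B⟩ hp
    simp only [mem_product, mem_powerset] at hp ⊢
    exact union_subset_union hp.1 hp.2
  · intro U hU
    rw [← inter_union_distrib_left, inter_eq_left.mpr (mem_powerset.mp hU)]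
  · rintro ⟨A, B⟩ hp
    simp only [mem_product, mem_powerset] at hp
    rw [union_inter_distrib_right, union_inter_distrib_right, inter_eq_left.mpr hp.1,
      inter_eq_left.mpr hp.2, disjoint_iff_inter_eq_empty.mp (h.mono_left hp.1),
      disjoint_iff_inter_eq_empty.mp (h.symm.mono_left hp.2), union_empty, empty_union]
  · intro U hU
    rw [← inter_union_distrib_left, inter_eq_left.mpr (mem_powerset.mp hU)]

structure IsSemicoherentOn_s17 {ι : Type*} (f : Finset ι → ℝ) (W : Finset ι) : Prop where
  zero_or_one : ∀ A ⊆ W, f A = 0 ∨ f A = 1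
  mono : ∀ A B, A ⊆ B → B ⊆ W → f A ≤ f B
  empty : f ∅ = 0
  full : f W = 1

namespace IsSemicoherentOn_s17

variable {ι : Type*} {f : Finset ι → ℝ} {W A B : Finset ι}

lemma eq_one_of_subset (hf : IsSemicoherentOn_s17 f W) (hA : f A = 1) (hAB : A ⊆ B) (hB : B ⊆ W) :
    f B = 1 :=
  (hf.zero_or_one B hB).resolve_left fun h => by linarith [hf.mono A B hAB hB]

lemma nonempty_of_eq_one_s17 (hf : IsSemicoherentOn_s17 f W) (hA : f A = 1) : A.Nonempty := by
  rw [nonempty_iff_ne_empty]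
  rintro rfl
  simp [hf.empty] at hA

lemma insert_sub_eq_ite [DecidableEq ι] (hf : IsSemicoherentOn_s17 f W) {j : ι} (hA : insert j A ⊆ W) :
    f (insert j A) - f A = if f (insert j A) = 1 ∧ f A = 0 then 1 else 0 := by
  rcases hf.zero_or_one A ((subset_insert j A).trans hA) with h' | h'
  · rcases hf.zero_or_one _ hA with h | h <;> simp [h, h']
  · simp [hf.eq_one_of_subset h' (subset_insert j A) hA, h']

end IsSemicoherentOn_s17

section Lifetime

variable {Ω : Type*} {n : ℕ} {T : Fin n → Ω → ℝ} {W : Finset (Fin n)} {f : Finset (Fin n) → ℝ}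
  {ω : Ω}

lemma le_sysLifeOn_iff_s17 (hf : IsSemicoherentOn_s17 f W) (t : ℝ) :
    t ≤ sysLifeOn T W f ω ↔ f {i ∈ W | t ≤ T i ω} = 1 := by
  have hne : {A ∈ W.powerset | f A = 1}.Nonempty := ⟨W, by simp [hf.full]⟩
  rw [sysLifeOn, dif_pos hne, le_sup'_iff]
  constructor
  · rintro ⟨A, hA, ht⟩
    rw [mem_filter, mem_powerset] at hA
    rw [dif_pos (hf.nonempty_of_eq_one_s17 hA.2), le_inf'_iff] at ht
    exact hf.eq_one_of_subset hA.2 (fun i hi => mem_filter.mpr ⟨hA.1 hi, ht i hi⟩)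
      (filter_subset _ _)
  · intro h
    refine ⟨_, mem_filter.mpr ⟨mem_powerset.mpr (filter_subset _ _), h⟩, ?_⟩
    rw [dif_pos (hf.nonempty_of_eq_one_s17 h), le_inf'_iff]
    exact fun i hi => (mem_filter.mp hi).2

lemma lt_sysLifeOn_iff_s17 (hf : IsSemicoherentOn_s17 f W) (t : ℝ) :
    t < sysLifeOn T W f ω ↔ f {i ∈ W | t < T i ω} = 1 := by
  constructor
  · intro ht
    refine hf.eq_one_of_subset ((le_sysLifeOn_iff_s17 (T := T) (ω := ω) hf _).mp le_rfl)
      (fun i hi => ?_) (filter_subset _ _)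
    rw [mem_filter] at hi ⊢
    exact ⟨hi.1, ht.trans_le hi.2⟩
  · intro h
    have hne := hf.nonempty_of_eq_one_s17 h
    calc t < {i ∈ W | t < T i ω}.inf' hne (T · ω) :=
          (lt_inf'_iff hne).mpr fun i hi => (mem_filter.mp hi).2
      _ ≤ sysLifeOn T W f ω := by
          refine (le_sysLifeOn_iff_s17 hf _).mpr (hf.eq_one_of_subset h (fun i hi => ?_)
            (filter_subset _ _))
          exact mem_filter.mpr ⟨(mem_filter.mp hi).1, inf'_le _ hi⟩

lemma sysLifeOn_eq_iff_s17 (hf : IsSemicoherentOn_s17 f W) (t : ℝ) :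
    sysLifeOn T W f ω = t ↔ f {i ∈ W | t ≤ T i ω} = 1 ∧ f {i ∈ W | t < T i ω} = 0 := by
  rw [le_antisymm_iff, ← not_lt, lt_sysLifeOn_iff_s17 hf, le_sysLifeOn_iff_s17 hf, and_comm]
  rcases hf.zero_or_one _ (filter_subset (t < T · ω) W) with h | h <;> simp [h]

end Lifetime

section OrderStatistic

variable {Ω : Type*} {n : ℕ} {T : Fin n → Ω → ℝ} {M : Finset (Fin n)} {ω : Ω} {k : ℕ}

lemma orderStat_eq_orderEmbOfFin (hinj : Set.InjOn (T · ω) M) (hk1 : 1 ≤ k) (hk2 : k ≤ #M) :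
    orderStat T M k ω =
      (M.image (T · ω)).orderEmbOfFin (card_image_of_injOn hinj) ⟨k - 1, by omega⟩ := by
  rw [orderStat, ← image_val_of_injOn hinj, sort_val, orderEmbOfFin_apply,
    List.getD_eq_getElem _ _ (by simp [card_image_of_injOn hinj]; omega)]
  rfl

lemma exists_orderStat_eq (hinj : Set.InjOn (T · ω) M) (hk1 : 1 ≤ k) (hk2 : k ≤ #M) :
    ∃ j ∈ M, orderStat T M k ω = T j ω := by
  obtain ⟨j, hj, he⟩ := mem_image.mp <|
    orderEmbOfFin_mem _ (card_image_of_injOn hinj) ⟨k - 1, by omega⟩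
  exact ⟨j, hj, (orderStat_eq_orderEmbOfFin hinj hk1 hk2).trans he.symm⟩

lemma orderStat_eq_iff (hinj : Set.InjOn (T · ω) M) (hk1 : 1 ≤ k) (hk2 : k ≤ #M) {j : Fin n}
    (hj : j ∈ M) : orderStat T M k ω = T j ω ↔ #{i ∈ M | T j ω < T i ω} = #M - k := by
  set s := M.image (T · ω)
  have hs : #s = #M := card_image_of_injOn hinj
  obtain ⟨a, ha⟩ : T j ω ∈ Set.range (s.orderEmbOfFin hs) := by
    simpa [s] using ⟨j, hj, rfl⟩
  have hcard : #{i ∈ M | T j ω < T i ω} = #M - 1 - a := by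
    rw [← card_filter_lt_orderEmbOfFin s hs a, ha, filter_image,
      card_image_of_injOn (hinj.mono (filter_subset _ _))]
  rw [orderStat_eq_orderEmbOfFin hinj hk1 hk2, hcard, ← ha,
    (s.orderEmbOfFin hs).injective.eq_iff, Fin.ext_iff, Fin.val_mk]
  have := a.isLt
  omega

end OrderStatistic

noncomputable def pivotPairs {ι : Type*} [DecidableEq ι] (f : Finset ι → ℝ) (W M : Finset ι)
    (c : ℕ) : Finset (ι × Finset ι) :=
  {p ∈ M ×ˢ W.powerset | #(p.2 ∩ M) = c ∧ f (insert p.1 p.2) = 1 ∧ f p.2 = 0}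

lemma mem_pivotPairs {ι : Type*} [DecidableEq ι] {f : Finset ι → ℝ} {W M : Finset ι} {c : ℕ}
    {p : ι × Finset ι} :
    p ∈ pivotPairs f W M c ↔
      p.1 ∈ M ∧ p.2 ⊆ W ∧ #(p.2 ∩ M) = c ∧ f (insert p.1 p.2) = 1 ∧ f p.2 = 0 := by
  simp [pivotPairs, and_assoc]

lemma sum_pivotPairs {ι : Type*} [DecidableEq ι] {f : Finset ι → ℝ} {W M : Finset ι} {c : ℕ}
    (hf : IsSemicoherentOn_s17 f W) (hMW : M ⊆ W) (g : ι → Finset ι → ℝ) :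
    ∑ p ∈ pivotPairs f W M c, g p.1 p.2 =
      ∑ j ∈ M, ∑ U ∈ W.powerset with #(U ∩ M) = c, g j U * (f (insert j U) - f U) := by
  rw [pivotPairs, sum_filter, sum_product]
  refine sum_congr rfl fun j hj => ?_
  rw [sum_filter]
  refine sum_congr rfl fun U hU => ?_
  rw [hf.insert_sub_eq_ite (insert_subset (hMW hj) (mem_powerset.mp hU))]
  by_cases hc : #(U ∩ M) = c <;> simp [hc]

section Events

variable {Ω : Type*} {n : ℕ} {T : Fin n → Ω → ℝ} {W M A A' : Finset (Fin n)} {j j' : Fin n}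
  {ω : Ω}

/-- The event in the definition of `relQualMod μ T W j A`. -/
def survivorEvent (T : Fin n → Ω → ℝ) (W : Finset (Fin n)) (j : Fin n) (A : Finset (Fin n)) :
    Set Ω :=
  {ω | (∀ i ∈ W, i ∉ A → T i ω ≤ T j ω) ∧ ∀ i ∈ A, T j ω < T i ω}

lemma mem_survivorEvent_iff (hA : A ⊆ W) :
    ω ∈ survivorEvent T W j A ↔ {i ∈ W | T j ω < T i ω} = A := by
  constructor
  · rintro ⟨hle, hlt⟩
    ext i
    rw [mem_filter]
    exact ⟨fun ⟨hi, hji⟩ => by_contra fun hiA => (hle i hi hiA).not_gt hji,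
      fun hi => ⟨hA hi, hlt i hi⟩⟩
  · rintro rfl
    exact ⟨fun i hi hiA => not_lt.mp fun h => hiA (mem_filter.mpr ⟨hi, h⟩),
      fun i hi => (mem_filter.mp hi).2⟩

lemma apply_eq_of_mem_survivorEvent (hMW : M ⊆ W) (hj : j ∈ M) (hj' : j' ∈ M) (hA : A ⊆ W)
    (hA' : A' ⊆ W) (hc : #(A ∩ M) = #(A' ∩ M)) (h : ω ∈ survivorEvent T W j A)
    (h' : ω ∈ survivorEvent T W j' A') : T j ω = T j' ω := by
  have hfilter : ∀ {j B}, B ⊆ W → ω ∈ survivorEvent T W j B →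
      B ∩ M = {i ∈ M | T j ω < T i ω} := by
    intro j B hB hω
    rw [← (mem_survivorEvent_iff hB).mp hω, filter_inter, inter_eq_right.mpr hMW]
  rw [hfilter hA h, hfilter hA' h'] at hc
  exact apply_eq_of_card_filter_lt_eq (g := (T · ω)) hj hj' hc

lemma sysLifeOn_eq_orderStat_iff {f : Finset (Fin n) → ℝ} {k : ℕ} (hf : IsSemicoherentOn_s17 f W)
    (hMW : M ⊆ W) (hinj : Set.InjOn (T · ω) W) (hk1 : 1 ≤ k) (hk2 : k ≤ #M) :
    sysLifeOn T W f ω = orderStat T M k ω ↔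
      ∃ p ∈ pivotPairs f W M (#M - k), ω ∈ survivorEvent T W p.1 p.2 := by
  have hinjM := hinj.mono hMW
  have hpivot : ∀ j ∈ M, (sysLifeOn T W f ω = T j ω ∧ orderStat T M k ω = T j ω ↔
      (j, {i ∈ W | T j ω < T i ω}) ∈ pivotPairs f W M (#M - k)) := by
    intro j hj
    rw [sysLifeOn_eq_iff_s17 hf, filter_le_eq_insert_filter_lt hinj (hMW hj),
      orderStat_eq_iff hinjM hk1 hk2 hj, mem_pivotPairs, filter_inter, inter_eq_right.mpr hMW]
    simp only [hj, filter_subset, true_and]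
    tauto
  constructor
  · intro h
    obtain ⟨j, hj, hjk⟩ := exists_orderStat_eq hinjM hk1 hk2
    exact ⟨_, (hpivot j hj).mp ⟨h.trans hjk, hjk⟩,
      (mem_survivorEvent_iff (filter_subset _ _)).mpr rfl⟩
  · rintro ⟨⟨j, A⟩, hp, hω⟩
    obtain ⟨hj, hA, -⟩ : j ∈ M ∧ A ⊆ W ∧ _ := mem_pivotPairs.mp hp
    rw [← (mem_survivorEvent_iff hA).mp hω] at hp
    obtain ⟨h1, h2⟩ := (hpivot j hj).mpr hp
    exact h1.trans h2.symm

variable [MeasurableSpace Ω] {μ : Measure Ω}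

lemma measurableSet_survivorEvent (hT : ∀ i, Measurable (T i)) (W : Finset (Fin n)) (j : Fin n)
    (A : Finset (Fin n)) : MeasurableSet (survivorEvent T W j A) := by
  simp only [survivorEvent, Set.ofPred_and, Set.ofPred_forall]
  exact (MeasurableSet.iInter fun i => .iInter fun _ => .iInter fun _ =>
    measurableSet_le (hT i) (hT j)).inter
      (MeasurableSet.iInter fun i => .iInter fun _ => measurableSet_lt (hT j) (hT i))

lemma ae_injective_of_ties (hties : ∀ i j : Fin n, i ≠ j → μ {ω | T i ω = T j ω} = 0) :
    ∀ᵐ ω ∂μ, Function.Injective (T · ω) := by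
  have : ∀ᵐ ω ∂μ, ∀ i j : Fin n, i ≠ j → T i ω ≠ T j ω := by
    refine ae_all_iff.mpr fun i => ae_all_iff.mpr fun j => ?_
    by_cases hij : i = j
    · exact .of_forall fun _ h => absurd hij h
    · filter_upwards [measure_eq_zero_iff_ae_notMem.mp (hties i j hij)] with ω hω _ using hω
  filter_upwards [this] with ω hω i j hij
  by_contra hne
  exact hω i j hne hij

lemma aedisjoint_survivorEvent {f : Finset (Fin n) → ℝ} {c : ℕ}
    (hties : ∀ i j : Fin n, i ≠ j → μ {ω | T i ω = T j ω} = 0) (hMW : M ⊆ W)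
    {p q : Fin n × Finset (Fin n)} (hp : p ∈ pivotPairs f W M c) (hq : q ∈ pivotPairs f W M c)
    (hpq : p ≠ q) : AEDisjoint μ (survivorEvent T W p.1 p.2) (survivorEvent T W q.1 q.2) := by
  obtain ⟨hj, hA, hc, -⟩ := mem_pivotPairs.mp hp
  obtain ⟨hj', hA', hc', -⟩ := mem_pivotPairs.mp hq
  by_cases hjj : p.1 = q.1
  · refine Disjoint.aedisjoint (Set.disjoint_left.mpr fun ω h h' => hpq (Prod.ext hjj ?_))
    rw [← (mem_survivorEvent_iff hA).mp h, ← (mem_survivorEvent_iff hA').mp h', hjj]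
  · exact measure_mono_null (fun ω ⟨h, h'⟩ =>
      apply_eq_of_mem_survivorEvent hMW hj hj' hA hA' (hc.trans hc'.symm) h h') (hties _ _ hjj)

lemma toReal_measure_sysLifeOn_eq_orderStat [IsFiniteMeasure μ] {f : Finset (Fin n) → ℝ} {k : ℕ}
    (hT : ∀ i, Measurable (T i)) (hties : ∀ i j : Fin n, i ≠ j → μ {ω | T i ω = T j ω} = 0)
    (hf : IsSemicoherentOn_s17 f W) (hMW : M ⊆ W) (hk1 : 1 ≤ k) (hk2 : k ≤ #M) :
    (μ {ω | sysLifeOn T W f ω = orderStat T M k ω}).toReal =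
      ∑ j ∈ M, ∑ U ∈ W.powerset with #(U ∩ M) = #M - k,
        relQualMod μ T W j U * (f (insert j U) - f U) := by
  have hae : {ω | sysLifeOn T W f ω = orderStat T M k ω} =ᵐ[μ]
      ⋃ p ∈ pivotPairs f W M (#M - k), survivorEvent T W p.1 p.2 := by
    refine Filter.eventuallyEq_set.mpr ?_
    filter_upwards [ae_injective_of_ties hties] with ω hω
    simpa using sysLifeOn_eq_orderStat_iff hf hMW hω.injOn hk1 hk2
  rw [← sum_pivotPairs hf hMW, measure_congr hae,
    measure_biUnion_finset₀ (fun p hp q hq => aedisjoint_survivorEvent hties hMW hp hq)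
      fun p _ => (measurableSet_survivorEvent hT _ _ _).nullMeasurableSet,
    ENNReal.toReal_sum fun p _ => measure_ne_top μ _]
  rfl

end Events

section Quality

variable {Ω : Type*} [MeasurableSpace Ω] {μ : Measure Ω} {n : ℕ} {T : Fin n → Ω → ℝ}
  {M A B : Finset (Fin n)} {j : Fin n}

lemma relQualMod_univ : relQualMod μ T univ j A = relQual μ T j A := by
  simp [relQualMod, relQual]

lemma relQual_union_le_relQualMod [IsFiniteMeasure μ] (hB : Disjoint B M) :
    relQual μ T j (A ∪ B) ≤ relQualMod μ T M j A := by
  refine ENNReal.toReal_mono (measure_ne_top μ _) (measure_mono fun ω ⟨hle, hlt⟩ =>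
    ⟨fun i hi hiA => hle i ?_, fun i hi => hlt i (mem_union_left B hi)⟩)
  rw [mem_union, not_or]
  exact ⟨hiA, fun hiB => disjoint_left.mp hB hiB hi⟩

lemma notMem_of_relQualMod_ne_zero (h : relQualMod μ T M j A ≠ 0) : j ∉ A := by
  intro hjA
  refine h ?_
  have : {ω | (∀ i ∈ M, i ∉ A → T i ω ≤ T j ω) ∧ ∀ i ∈ A, T j ω < T i ω} = ∅ :=
    Set.eq_empty_of_forall_notMem fun ω hω => lt_irrefl _ (hω.2 j hjA)
  rw [relQualMod, this, measure_empty, ENNReal.toReal_zero]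

lemma relQual_union_eq_mul [IsFiniteMeasure μ]
    (hratio : ∀ j ∈ M, ∀ j' ∈ M, ∀ A ⊆ M \ {j}, ∀ A' ⊆ M \ {j'},
      A.card = A'.card → relQualMod μ T M j A ≠ 0 → relQualMod μ T M j' A' ≠ 0 →
      ∀ B ⊆ Finset.univ \ M,
        relQual μ T j (A ∪ B) / relQualMod μ T M j A =
          relQual μ T j' (A' ∪ B) / relQualMod μ T M j' A')
    {j₀ : Fin n} {A₀ : Finset (Fin n)} (hj₀ : j₀ ∈ M) (hA₀ : A₀ ⊆ M \ {j₀})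
    (hq₀ : relQualMod μ T M j₀ A₀ ≠ 0) (hj : j ∈ M) (hA : A ⊆ M) (hc : #A = #A₀)
    (hB : B ⊆ univ \ M) :
    relQual μ T j (A ∪ B) =
      relQualMod μ T M j A * (relQual μ T j₀ (A₀ ∪ B) / relQualMod μ T M j₀ A₀) := by
  by_cases hz : relQualMod μ T M j A = 0
  · rw [hz, zero_mul]
    exact le_antisymm (hz ▸ relQual_union_le_relQualMod (subset_sdiff.mp hB).2)
      ENNReal.toReal_nonneg
  · have hA' : A ⊆ M \ {j} := fun i hi =>
      mem_sdiff.mpr ⟨hA hi, fun hij => notMem_of_relQualMod_ne_zero hz (mem_singleton.mp hij ▸ hi)⟩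
    rw [← hratio j hj j₀ hj₀ A hA' A₀ hA₀ hc hz hq₀ B hB, mul_div_cancel₀ _ hz]

end Quality

section Module

variable {ι : Type*} [DecidableEq ι] {φ χ : Finset ι → ℝ} {ψ : Finset ι → Bool → ℝ}
  {M : Finset ι}

lemma pivotal_decomposition
    (hmod : ∀ A, φ A = ψ (A \ M) (if χ (A ∩ M) = 1 then true else false))
    (hχ : IsSemicoherentOn_s17 χ M) {j : ι} (hj : j ∈ M) {A B : Finset ι} (hA : A ⊆ M)
    (hB : Disjoint B M) :
    φ (insert j (A ∪ B)) - φ (A ∪ B) = (χ (insert j A) - χ A) * (ψ B true - ψ B false) := by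
  have hsplit : ∀ A' ⊆ M, φ (A' ∪ B) = ψ B (if χ A' = 1 then true else false) := by
    intro A' hA'
    rw [hmod, union_inter_distrib_right, union_sdiff_distrib, inter_eq_left.mpr hA',
      disjoint_iff_inter_eq_empty.mp hB, sdiff_eq_empty_iff_subset.mpr hA', hB.sdiff_eq_left,
      union_empty, empty_union]
  have hinsert : insert j A ⊆ M := insert_subset hj hA
  rw [← insert_union, hsplit _ hinsert, hsplit A hA]
  rcases hχ.zero_or_one A hA with h | h
  · rcases hχ.zero_or_one _ hinsert with h' | h' <;> simp [h, h']
  · simp [hχ.eq_one_of_subset h (subset_insert j A) hinsert, h]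

lemma sum_pivot_mul_eq_mul_sum [Fintype ι]
    (hmod : ∀ A, φ A = ψ (A \ M) (if χ (A ∩ M) = 1 then true else false))
    (hχ : IsSemicoherentOn_s17 χ M) {j : ι} (hj : j ∈ M) {c : ℕ} (q qM r : Finset ι → ℝ)
    (hq : ∀ A ⊆ M, #A = c → ∀ B ⊆ univ \ M, q (A ∪ B) = qM A * r B) :
    ∑ U ∈ (univ : Finset ι).powerset with #(U ∩ M) = c, q U * (φ (insert j U) - φ U) =
      (∑ A ∈ M.powerset with #(A ∩ M) = c, qM A * (χ (insert j A) - χ A)) *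
        ∑ B ∈ (univ \ M).powerset, r B * (ψ B true - ψ B false) := by
  have huniv : (univ : Finset ι).powerset = (M ∪ (univ \ M)).powerset := by
    rw [union_sdiff_of_subset (subset_univ M)]
  rw [huniv, sum_filter, sum_powerset_union disjoint_sdiff, sum_filter, sum_mul_sum]
  refine sum_congr rfl fun A hA => sum_congr rfl fun B hB => ?_
  rw [mem_powerset] at hA hB
  have hBM : Disjoint B M := (subset_sdiff.mp hB).2
  rw [union_inter_distrib_right, inter_eq_left.mpr hA, disjoint_iff_inter_eq_empty.mp hBM,
    union_empty]
  split_ifs with hc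
  · rw [hq A hA hc B hB, pivotal_decomposition hmod hχ hj hA hBM]
    ring
  · rw [zero_mul]

end Module

/- A subset of the reduced component set `C_M = (C∖M) ∪ {[M]}` is encoded as a pair
consisting of a `Finset (Fin n)` (its part in `C∖M`) and a `Bool` recording whether the
macro-component `[M]` belongs to it; the organizing structure is `ψ : Finset (Fin n) → Bool → ℝ`,
and `Δ_[M]ψ(B) = ψ B true - ψ B false`. -/
theorem stmt_17_general {Ω : Type*} [MeasurableSpace Ω] (μ : Measure Ω) [IsProbabilityMeasure μ]
    {n : ℕ} (T : Fin n → Ω → ℝ) (hTmeas : ∀ i, Measurable (T i))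
    (hties : ∀ i j : Fin n, i ≠ j → μ {ω | T i ω = T j ω} = 0)
    (φ : Finset (Fin n) → ℝ)
    (hφ01 : ∀ A, φ A = 0 ∨ φ A = 1)
    (hφmono : ∀ A B : Finset (Fin n), A ⊆ B → φ A ≤ φ B)
    (hφempty : φ ∅ = 0) (hφfull : φ Finset.univ = 1)
    (M : Finset (Fin n))
    (χ : Finset (Fin n) → ℝ) (ψ : Finset (Fin n) → Bool → ℝ)
    (hχ01 : ∀ A, A ⊆ M → χ A = 0 ∨ χ A = 1)
    (hχmono : ∀ A B : Finset (Fin n), A ⊆ B → B ⊆ M → χ A ≤ χ B)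
    (hχempty : χ ∅ = 0) (hχfull : χ M = 1)
    (hmod : ∀ A : Finset (Fin n),
      φ A = ψ (A \ M) (if χ (A ∩ M) = 1 then true else false))
    (hratio : ∀ j ∈ M, ∀ j' ∈ M, ∀ A ⊆ M \ {j}, ∀ A' ⊆ M \ {j'},
      A.card = A'.card → relQualMod μ T M j A ≠ 0 → relQualMod μ T M j' A' ≠ 0 →
      ∀ B ⊆ Finset.univ \ M,
        relQual μ T j (A ∪ B) / relQualMod μ T M j A =
          relQual μ T j' (A' ∪ B) / relQualMod μ T M j' A') :
    ∀ k : ℕ, 1 ≤ k → k ≤ M.card → ∀ j ∈ M, ∀ A ⊆ M \ {j},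
      A.card = M.card - k → relQualMod μ T M j A ≠ 0 →
      (μ {ω | sysLifeOn T Finset.univ φ ω = orderStat T M k ω}).toReal =
        (μ {ω | sysLifeOn T M χ ω = orderStat T M k ω}).toReal *
          ∑ B ∈ ((Finset.univ : Finset (Fin n)) \ M).powerset,
            (relQual μ T j (A ∪ B) / relQualMod μ T M j A) * (ψ B true - ψ B false) := by
  intro k hk1 hk2 j₀ hj₀ A₀ hA₀ hcard₀ hq₀
  have hφ : IsSemicoherentOn_s17 φ univ :=
    ⟨fun A _ => hφ01 A, fun A B hAB _ => hφmono A B hAB, hφempty, hφfull⟩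
  have hχ : IsSemicoherentOn_s17 χ M := ⟨hχ01, hχmono, hχempty, hχfull⟩
  rw [toReal_measure_sysLifeOn_eq_orderStat hTmeas hties hφ (subset_univ M) hk1 hk2,
    toReal_measure_sysLifeOn_eq_orderStat hTmeas hties hχ subset_rfl hk1 hk2, sum_mul]
  refine sum_congr rfl fun j hj => ?_
  simp only [relQualMod_univ]
  exact sum_pivot_mul_eq_mul_sum hmod hχ hj _ _ _ fun A hA hc B hB =>
    relQual_union_eq_mul hratio hj₀ hA₀ hq₀ hj hA (hc.trans hcard₀.symm) hB

theorem stmt_17 {Ω : Type*} [MeasurableSpace Ω] (μ : Measure Ω) [IsProbabilityMeasure μ]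
    {n : ℕ} (T : Fin n → Ω → ℝ) (hTmeas : ∀ i, Measurable (T i))
    (hTnonneg : ∀ i ω, 0 ≤ T i ω)
    (hties : ∀ i j : Fin n, i ≠ j → μ {ω | T i ω = T j ω} = 0)
    (φ : Finset (Fin n) → ℝ)
    (hφ01 : ∀ A, φ A = 0 ∨ φ A = 1)
    (hφmono : ∀ A B : Finset (Fin n), A ⊆ B → φ A ≤ φ B)
    (hφempty : φ ∅ = 0) (hφfull : φ Finset.univ = 1)
    (M : Finset (Fin n)) (hM : M.Nonempty)
    (χ : Finset (Fin n) → ℝ) (ψ : Finset (Fin n) → Bool → ℝ)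
    (hχ01 : ∀ A, A ⊆ M → χ A = 0 ∨ χ A = 1)
    (hχmono : ∀ A B : Finset (Fin n), A ⊆ B → B ⊆ M → χ A ≤ χ B)
    (hχempty : χ ∅ = 0) (hχfull : χ M = 1)
    (hψ01 : ∀ B b, B ⊆ Finset.univ \ M → ψ B b = 0 ∨ ψ B b = 1)
    (hψmono : ∀ (B B' : Finset (Fin n)) (b b' : Bool), B ⊆ B' → B' ⊆ Finset.univ \ M →
      (b = true → b' = true) → ψ B b ≤ ψ B' b')
    (hψempty : ψ ∅ false = 0) (hψfull : ψ (Finset.univ \ M) true = 1)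
    (hmod : ∀ A : Finset (Fin n),
      φ A = ψ (A \ M) (if χ (A ∩ M) = 1 then true else false))
    (hratio : ∀ j ∈ M, ∀ j' ∈ M, ∀ A ⊆ M \ {j}, ∀ A' ⊆ M \ {j'},
      A.card = A'.card → relQualMod μ T M j A ≠ 0 → relQualMod μ T M j' A' ≠ 0 →
      ∀ B ⊆ Finset.univ \ M,
        relQual μ T j (A ∪ B) / relQualMod μ T M j A =
          relQual μ T j' (A' ∪ B) / relQualMod μ T M j' A') :
    ∀ k : ℕ, 1 ≤ k → k ≤ M.card → ∀ j ∈ M, ∀ A ⊆ M \ {j},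
      A.card = M.card - k → relQualMod μ T M j A ≠ 0 →
      (μ {ω | sysLifeOn T Finset.univ φ ω = orderStat T M k ω}).toReal =
        (μ {ω | sysLifeOn T M χ ω = orderStat T M k ω}).toReal *
          ∑ B ∈ ((Finset.univ : Finset (Fin n)) \ M).powerset,
            (relQual μ T j (A ∪ B) / relQualMod μ T M j A) * (ψ B true - ψ B false) :=
  stmt_17_general μ T hTmeas hties φ hφ01 hφmono hφempty hφfull M χ ψ hχ01 hχmono hχempty hχfull
    hmod hratio
end

section
/- Let (M,χ) be a module of the system with m = |M|, and suppose the relative quality function of the macro-component satisfies q_[M](A) = 1/((n−m+1)·C(n−m,|A|)) for every A ⊆ C∖M. Then Pr(T_C = T_M) = ∫_0^1 ∑_{B⊆C∖M} t^{|B|}·(1−t)^{n−m−|B|}·Δ_[M]ψ(B) dt. -/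
open MeasureTheory Finset

/- A subset of the reduced component set `C_M = (C∖M) ∪ {[M]}` is encoded as a pair
consisting of a `Finset (Fin n)` (its part in `C∖M`) and a `Bool` recording whether the
macro-component `[M]` belongs to it; the organizing structure is `ψ : Finset (Fin n) → Bool → ℝ`,
and `Δ_[M]ψ(B) = ψ B true - ψ B false`. -/

lemma sysLife_ge_iff {Ω : Type*} {n : ℕ} (T : Fin n → Ω → ℝ) (D : Finset (Fin n))
    (f : Finset (Fin n) → ℝ)
    (h01 : ∀ A, A ⊆ D → f A = 0 ∨ f A = 1)
    (hmono : ∀ A B, A ⊆ B → B ⊆ D → f A ≤ f B)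
    (hempty : f ∅ = 0) (hfull : f D = 1) (ω : Ω) (t : ℝ) :
    t ≤ sysLifeOn T D f ω ↔ f (D.filter fun i => t ≤ T i ω) = 1 := by
  have hSne : (D.powerset.filter fun A => f A = 1).Nonempty :=
    ⟨D, by simp [hfull]⟩
  rw [sysLifeOn, dif_pos hSne]
  constructor
  · intro ht
    obtain ⟨A, hA, hEq⟩ := Finset.exists_mem_eq_sup' hSne
      (fun A => if hA : A.Nonempty then A.inf' hA fun i => T i ω else 0)
    rw [hEq] at ht
    rw [mem_filter, mem_powerset] at hA
    have hAne : A.Nonempty := by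
      rcases A.eq_empty_or_nonempty with h | h
      · exfalso; rw [h, hempty] at hA; exact one_ne_zero hA.2.symm
      · exact h
    rw [dif_pos hAne] at ht
    have hsub : A ⊆ D.filter fun i => t ≤ T i ω := by
      intro i hi
      have hti : t ≤ T i ω := le_trans ht (Finset.inf'_le (fun j => T j ω) hi)
      exact mem_filter.2 ⟨hA.1 hi, hti⟩
    have hle := hmono A _ hsub (filter_subset _ _)
    rcases h01 (D.filter fun i => t ≤ T i ω) (filter_subset _ _) with h | h
    · rw [hA.2, h] at hle; linarith
    · exact h
  · intro hf
    have hne : (D.filter fun i => t ≤ T i ω).Nonempty := by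
      rcases (D.filter fun i => t ≤ T i ω).eq_empty_or_nonempty with h | h
      · exfalso; rw [h, hempty] at hf; exact one_ne_zero hf.symm
      · exact h
    have hmem : (D.filter fun i => t ≤ T i ω) ∈
        D.powerset.filter fun A => f A = 1 :=
      mem_filter.2 ⟨mem_powerset.2 (filter_subset _ _), hf⟩
    have h1 : t ≤ (D.filter fun i => t ≤ T i ω).inf' hne fun i => T i ω :=
      Finset.le_inf' _ _ fun i hi => (mem_filter.1 hi).2
    have h2 := Finset.le_sup'
      (fun A => if hA : A.Nonempty then A.inf' hA fun i => T i ω else 0) hmem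
    rw [dif_pos hne] at h2
    exact le_trans h1 h2

lemma sysLifeOn_measurable {Ω : Type*} [MeasurableSpace Ω] {n : ℕ} {T : Fin n → Ω → ℝ}
    (hT : ∀ i, Measurable (T i)) (D : Finset (Fin n)) (f : Finset (Fin n) → ℝ) :
    Measurable (sysLifeOn T D f) := by
  unfold sysLifeOn
  split_ifs with h
  · have hAmeas : ∀ A : Finset (Fin n), Measurable fun ω =>
        if hA : A.Nonempty then A.inf' hA fun i => T i ω else 0 := by
      intro A
      rcases A.eq_empty_or_nonempty with rfl | hA
      · simp only [Finset.not_nonempty_empty, dif_neg]; exact measurable_const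
      · simp only [dif_pos hA]
        have : (fun ω => A.inf' hA fun i => T i ω) = A.inf' hA T := by
          ext ω; rw [Finset.inf'_apply]
        rw [this]
        exact Finset.inf'_induction hA _ (fun g hg g' hg' => hg.inf hg') fun i _ => hT i
    have : (fun ω => (D.powerset.filter fun A => f A = 1).sup' h
        (fun A => if hA : A.Nonempty then A.inf' hA fun i => T i ω else 0)) =
        (D.powerset.filter fun A => f A = 1).sup' h
          (fun A ω => if hA : A.Nonempty then A.inf' hA fun i => T i ω else 0) := by
      ext ω; rw [Finset.sup'_apply]
    exact this ▸ Finset.measurable_sup' h fun A _ => hAmeas A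
  · exact measurable_const

lemma beta_nat (a b : ℕ) :
    ∫ x in (0:ℝ)..1, x ^ a * (1 - x) ^ b =
      (a.factorial * b.factorial : ℝ) / (a + b + 1).factorial := by
  induction b generalizing a with
  | zero =>
      simp only [pow_zero, mul_one, integral_pow, Nat.factorial_zero]
      rw [Nat.add_zero, Nat.factorial_succ]
      push_cast
      field_simp
      simp
  | succ b IH =>
      have hu : ∀ x ∈ Set.uIcc (0:ℝ) 1, HasDerivAt (fun x : ℝ => (1 - x) ^ (b + 1))
          (-((b+1) * (1 - x) ^ b)) x := by
        intro x _
        have h1 : HasDerivAt (fun x : ℝ => 1 - x) (-1) x := by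
          simpa using (hasDerivAt_id x).const_sub 1
        have := h1.pow (b + 1)
        simpa [mul_comm, mul_assoc, mul_left_comm, Pi.pow_def] using this
      have hv : ∀ x ∈ Set.uIcc (0:ℝ) 1, HasDerivAt (fun x : ℝ => x ^ (a + 1) / (a + 1))
          (x ^ a) x := by
        intro x _
        have := (hasDerivAt_pow (a + 1) x).div_const ((a : ℝ) + 1)
        have ha : ((a : ℝ) + 1) ≠ 0 := by positivity
        simpa [Nat.add_sub_cancel, mul_comm, mul_div_assoc, div_self ha]
          using this
      have hint1 : IntervalIntegrable (fun x : ℝ => -((b+1) * (1 - x) ^ b)) volume 0 1 :=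
        (Continuous.intervalIntegrable (by continuity) 0 1)
      have hint2 : IntervalIntegrable (fun x : ℝ => x ^ a) volume 0 1 :=
        (Continuous.intervalIntegrable (by continuity) 0 1)
      have ibp := intervalIntegral.integral_mul_deriv_eq_deriv_mul hu hv hint1 hint2
      have : ∫ x in (0:ℝ)..1, (1 - x) ^ (b+1) * x ^ a =
          ((b:ℝ)+1)/((a:ℝ)+1) * ∫ x in (0:ℝ)..1, x ^ (a+1) * (1 - x) ^ b := by
        rw [ibp]
        have h0 : ((1:ℝ) - 1) ^ (b+1) * ((1:ℝ) ^ (a+1) / ((a:ℝ)+1)) -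
            ((1:ℝ) - 0) ^ (b+1) * ((0:ℝ) ^ (a+1) / ((a:ℝ)+1)) = 0 := by
          simp [zero_pow]
        rw [h0, zero_sub, ← intervalIntegral.integral_neg,
          ← intervalIntegral.integral_const_mul]
        exact intervalIntegral.integral_congr fun x _ => by ring
      rw [show (fun x : ℝ => x ^ a * (1 - x) ^ (b+1)) = fun x : ℝ => (1 - x) ^ (b+1) * x ^ a from
        funext fun x => by ring, this, IH (a+1)]
      have ha : ((a:ℝ)+1) ≠ 0 := by positivity
      rw [Nat.factorial_succ (a), Nat.factorial_succ b, show a + 1 + b + 1 = a + (b+1) + 1 by ring]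
      push_cast
      field_simp

theorem stmt_18 {Ω : Type*} [MeasurableSpace Ω] (μ : Measure Ω) [IsProbabilityMeasure μ]
    {n : ℕ} (T : Fin n → Ω → ℝ) (hTmeas : ∀ i, Measurable (T i))
    (hTnonneg : ∀ i ω, 0 ≤ T i ω)
    (hties : ∀ i j : Fin n, i ≠ j → μ {ω | T i ω = T j ω} = 0)
    (φ : Finset (Fin n) → ℝ)
    (hφ01 : ∀ A, φ A = 0 ∨ φ A = 1)
    (hφmono : ∀ A B : Finset (Fin n), A ⊆ B → φ A ≤ φ B)
    (hφempty : φ ∅ = 0) (hφfull : φ Finset.univ = 1)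
    (M : Finset (Fin n)) (hM : M.Nonempty)
    (χ : Finset (Fin n) → ℝ) (ψ : Finset (Fin n) → Bool → ℝ)
    (hχ01 : ∀ A, A ⊆ M → χ A = 0 ∨ χ A = 1)
    (hχmono : ∀ A B : Finset (Fin n), A ⊆ B → B ⊆ M → χ A ≤ χ B)
    (hχempty : χ ∅ = 0) (hχfull : χ M = 1)
    (hψ01 : ∀ B b, B ⊆ Finset.univ \ M → ψ B b = 0 ∨ ψ B b = 1)
    (hψmono : ∀ (B B' : Finset (Fin n)) (b b' : Bool), B ⊆ B' → B' ⊆ Finset.univ \ M →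
      (b = true → b' = true) → ψ B b ≤ ψ B' b')
    (hψempty : ψ ∅ false = 0) (hψfull : ψ (Finset.univ \ M) true = 1)
    (hmod : ∀ A : Finset (Fin n),
      φ A = ψ (A \ M) (if χ (A ∩ M) = 1 then true else false))
    (hqM : ∀ A ⊆ Finset.univ \ M,
      (μ {ω | (∀ i, i ∉ M → i ∉ A → T i ω < sysLifeOn T M χ ω) ∧
            ∀ i ∈ A, sysLifeOn T M χ ω < T i ω}).toReal =
        1 / (((n - M.card + 1 : ℕ) : ℝ) * ((n - M.card).choose A.card : ℕ))) :
    (μ {ω | sysLifeOn T Finset.univ φ ω = sysLifeOn T M χ ω}).toReal =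
      ∫ t in (0:ℝ)..1,
        ∑ B ∈ ((Finset.univ : Finset (Fin n)) \ M).powerset,
          t ^ B.card * (1 - t) ^ (n - M.card - B.card) * (ψ B true - ψ B false) := by
  classical
  set L : Ω → ℝ := sysLifeOn T M χ with hLdef
  set N : ℕ := n - M.card with hNdef
  set S : Finset (Fin n) := Finset.univ \ M with hSdef
  have hScard : S.card = N := by
    rw [hSdef, card_sdiff_of_subset (subset_univ M), card_univ, Fintype.card_fin]
  set E : Finset (Fin n) → Set Ω := fun B =>
    {ω | (∀ i, i ∉ M → i ∉ B → T i ω < L ω) ∧ ∀ i ∈ B, L ω < T i ω} with hEdef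
  have hLmeas : Measurable L := sysLifeOn_measurable hTmeas M χ
  -- measurability of the events
  have hEmeas : ∀ B : Finset (Fin n), MeasurableSet (E B) := by
    intro B
    have hrw : E B = (⋂ i ∈ (S \ B : Finset (Fin n)), {ω | T i ω < L ω}) ∩
        ⋂ i ∈ B, {ω | L ω < T i ω} := by
      ext ω
      simp only [hEdef, hSdef, Set.mem_inter_iff, Set.mem_iInter, Set.mem_setOf_eq, mem_sdiff,
        mem_univ, true_and]
      constructor
      · rintro ⟨h1, h2⟩; exact ⟨fun i hi => h1 i hi.1 hi.2, h2⟩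
      · rintro ⟨h1, h2⟩; exact ⟨fun i hiM hiB => h1 i ⟨hiM, hiB⟩, h2⟩
    rw [hrw]
    exact (MeasurableSet.iInter fun i => MeasurableSet.iInter fun _ =>
        measurableSet_lt (hTmeas i) hLmeas).inter
      (MeasurableSet.iInter fun i => MeasurableSet.iInter fun _ =>
        measurableSet_lt hLmeas (hTmeas i))
  -- two reliability characterizations
  have hφchar : ∀ ω t, t ≤ sysLifeOn T Finset.univ φ ω ↔
      φ (Finset.univ.filter fun i => t ≤ T i ω) = 1 := fun ω t =>
    sysLife_ge_iff T Finset.univ φ (fun A _ => hφ01 A) (fun A B hAB _ => hφmono A B hAB)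
      hφempty hφfull ω t
  have hχchar : ∀ ω t, t ≤ L ω ↔ χ (M.filter fun i => t ≤ T i ω) = 1 := fun ω t =>
    sysLife_ge_iff T M χ hχ01 hχmono hχempty hχfull ω t
  -- key pointwise characterization on each event
  have hkey : ∀ B ∈ S.powerset, ∀ ω ∈ E B,
      (sysLifeOn T Finset.univ φ ω = L ω ↔ (ψ B true = 1 ∧ ψ B false = 0)) := by
    intro B hB ω hω
    rw [mem_powerset] at hB
    obtain ⟨h1, h2⟩ := hω
    have hBS : B ⊆ S := hB
    have hBM : ∀ i ∈ B, i ∉ M := by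
      intro i hi
      have := hBS hi
      rw [hSdef, mem_sdiff] at this
      exact this.2
    have hfiltL : (Finset.univ.filter fun i => L ω ≤ T i ω) \ M = B := by
      ext i
      simp only [mem_sdiff, mem_filter, mem_univ, true_and]
      constructor
      · rintro ⟨hle, hiM⟩
        by_contra hiB
        exact absurd hle (not_le.2 (h1 i hiM hiB))
      · intro hiB
        exact ⟨le_of_lt (h2 i hiB), hBM i hiB⟩
    have hfiltLM : (Finset.univ.filter fun i => L ω ≤ T i ω) ∩ M =
        M.filter fun i => L ω ≤ T i ω := by
      ext i; simp only [mem_inter, mem_filter, mem_univ, true_and]; tauto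
    have hψfb : ψ B false ≤ ψ B true := hψmono B B false true (subset_refl B) hBS (by simp)
    rcases hψ01 B true hBS with hT1 | hT1
    · -- ψ B true = 0
      have hF0 : ψ B false = 0 := by
        rcases hψ01 B false hBS with h | h
        · exact h
        · exfalso; rw [h, hT1] at hψfb; linarith
      constructor
      · intro hEq
        exfalso
        have hφ1 := (hφchar ω (L ω)).1 (le_of_eq hEq.symm)
        rw [hmod, hfiltL] at hφ1
        have hle : ψ B (if χ ((Finset.univ.filter fun i => L ω ≤ T i ω) ∩ M) = 1
            then true else false) ≤ ψ B true :=
          hψmono B B _ true (subset_refl B) hBS (fun _ => rfl)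
        rw [hφ1, hT1] at hle; linarith
      · rintro ⟨h, _⟩; exfalso; rw [h] at hT1; linarith
    · -- ψ B true = 1
      rcases hψ01 B false hBS with hF0 | hF1
      · constructor
        · intro _; exact ⟨hT1, hF0⟩
        · intro _
          have hgeL : L ω ≤ sysLifeOn T Finset.univ φ ω := by
            rw [hφchar, hmod, hfiltL, hfiltLM]
            have hχL : χ (M.filter fun i => L ω ≤ T i ω) = 1 := (hχchar ω (L ω)).1 le_rfl
            rw [if_pos hχL]; exact hT1
          have hleL : sysLifeOn T Finset.univ φ ω ≤ L ω := by
            by_contra hlt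
            push_neg at hlt
            set t := sysLifeOn T Finset.univ φ ω with htdef
            have h1' := (hφchar ω t).1 le_rfl
            rw [hmod] at h1'
            have hχt : χ (M.filter fun i => t ≤ T i ω) ≠ 1 := by
              intro hc
              have := (hχchar ω t).2 hc
              linarith
            have hsub : ((Finset.univ.filter fun i => t ≤ T i ω) \ M) ⊆ B := by
              intro i hi
              rw [mem_sdiff, mem_filter] at hi
              by_contra hiB
              have := h1 i hi.2 hiB
              linarith [hi.1.2]
            have hMfilt : (Finset.univ.filter fun i => t ≤ T i ω) ∩ M =
                M.filter fun i => t ≤ T i ω := by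
              ext i; simp only [mem_inter, mem_filter, mem_univ, true_and]; tauto
            rw [hMfilt, if_neg hχt] at h1'
            have hle2 : ψ ((Finset.univ.filter fun i => t ≤ T i ω) \ M) false ≤ ψ B false :=
              hψmono _ B false false hsub hBS (fun h => h)
            rw [h1', hF0] at hle2; linarith
          exact le_antisymm hleL hgeL
      · -- ψ B false = 1 : system outlives the module
        constructor
        · intro hEq
          exfalso
          have hBne : B.Nonempty := by
            rcases B.eq_empty_or_nonempty with rfl | h
            · exfalso; rw [hψempty] at hF1; linarith
            · exact h
          have hφB : φ B = 1 := by
            rw [hmod B]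
            have hBiM : B ∩ M = ∅ := by
              ext i
              simp only [mem_inter, notMem_empty, iff_false, not_and]
              exact fun hiB => hBM i hiB
            have hBdM : B \ M = B := by
              ext i
              simp only [mem_sdiff, and_iff_left_iff_imp]
              exact fun hiB => hBM i hiB
            rw [hBiM, hχempty, if_neg (by norm_num), hBdM]
            exact hF1
          set t := B.inf' hBne fun i => T i ω with htdef
          have hlt : L ω < t := (Finset.lt_inf'_iff hBne).2 fun i hi => h2 i hi
          have hge : t ≤ sysLifeOn T Finset.univ φ ω := by
            rw [hφchar]
            have hsub : B ⊆ Finset.univ.filter fun i => t ≤ T i ω := fun i hi =>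
              mem_filter.2 ⟨mem_univ i, Finset.inf'_le (fun j => T j ω) hi⟩
            rcases hφ01 (Finset.univ.filter fun i => t ≤ T i ω) with h | h
            · exfalso
              have := hφmono B _ hsub
              rw [hφB, h] at this; linarith
            · exact h
          rw [hEq] at hge; linarith
        · rintro ⟨_, h⟩; exfalso; rw [h] at hF1; linarith
  -- the events are pairwise disjoint
  have hEsame : ∀ B ∈ S.powerset, ∀ B' ∈ S.powerset, ∀ ω, ω ∈ E B → ω ∈ E B' → B = B' := by
    intro B hB B' hB' ω hω hω'
    rw [mem_powerset] at hB hB'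
    ext i
    constructor
    · intro hi
      by_contra hi'
      have hiM : i ∉ M := (mem_sdiff.1 (hB hi)).2
      exact absurd (hω.2 i hi) (not_lt.2 (le_of_lt (hω'.1 i hiM hi')))
    · intro hi
      by_contra hi'
      have hiM : i ∉ M := (mem_sdiff.1 (hB' hi)).2
      exact absurd (hω'.2 i hi) (not_lt.2 (le_of_lt (hω.1 i hiM hi')))
  have hPD : (↑S.powerset : Set (Finset (Fin n))).PairwiseDisjoint E := by
    intro B hB B' hB' hne
    have : Disjoint (E B) (E B') := Set.disjoint_left.2 fun ω h h' =>
      hne (hEsame B (by exact_mod_cast hB) B' (by exact_mod_cast hB') ω h h')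
    exact this
  -- the probabilities of the events
  have hqE : ∀ B ∈ S.powerset, (μ (E B)).toReal =
      1 / (((N + 1 : ℕ) : ℝ) * ((N.choose B.card : ℕ) : ℝ)) := by
    intro B hB
    simp only [hEdef]
    exact hqM B (mem_powerset.1 hB)
  -- the events cover Ω up to measure zero
  have hsum1 : ∑ B ∈ S.powerset, (μ (E B)).toReal = 1 := by
    rw [Finset.sum_congr rfl hqE]
    rw [Finset.sum_powerset_apply_card
      (fun k => 1 / (((N + 1 : ℕ) : ℝ) * ((N.choose k : ℕ) : ℝ))), hScard]
    have hterm : ∀ k ∈ range (N + 1),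
        (N.choose k) • ((1:ℝ) / (((N + 1 : ℕ) : ℝ) * ((N.choose k : ℕ) : ℝ))) =
          1 / ((N : ℝ) + 1) := by
      intro k hk
      have hkN : k ≤ N := Nat.lt_succ_iff.1 (mem_range.1 hk)
      have hpos : (0:ℝ) < (N.choose k : ℝ) := by exact_mod_cast Nat.choose_pos hkN
      rw [nsmul_eq_mul]
      push_cast
      field_simp
    rw [Finset.sum_congr rfl hterm, Finset.sum_const, card_range, nsmul_eq_mul]
    have hne : ((N : ℝ) + 1) ≠ 0 := by positivity
    push_cast
    field_simp
  have hUmeasure : μ (⋃ B ∈ S.powerset, E B) = ∑ B ∈ S.powerset, μ (E B) :=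
    measure_biUnion_finset hPD (fun B _ => hEmeas B)
  have hU1 : μ (⋃ B ∈ S.powerset, E B) = 1 := by
    have hfin : ∀ B ∈ S.powerset, μ (E B) ≠ ⊤ := fun B _ => measure_ne_top μ _
    have htr : (μ (⋃ B ∈ S.powerset, E B)).toReal = 1 := by
      rw [hUmeasure, ENNReal.toReal_sum hfin]
      exact hsum1
    have hUne : μ (⋃ B ∈ S.powerset, E B) ≠ ⊤ := measure_ne_top μ _
    rw [← ENNReal.ofReal_toReal hUne, htr]
    simp
  have hUmeas : MeasurableSet (⋃ B ∈ S.powerset, E B) :=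
    MeasurableSet.iUnion fun B => MeasurableSet.iUnion fun _ => hEmeas B
  have hcompl : μ (⋃ B ∈ S.powerset, E B)ᶜ = 0 := by
    rw [measure_compl hUmeas (measure_ne_top μ _), hU1, measure_univ, tsub_self]
  -- decompose the event of interest
  have hGU : μ {ω | sysLifeOn T Finset.univ φ ω = L ω} =
      μ ({ω | sysLifeOn T Finset.univ φ ω = L ω} ∩ ⋃ B ∈ S.powerset, E B) :=
    (measure_inter_conull hcompl).symm
  have hGUeq : {ω | sysLifeOn T Finset.univ φ ω = L ω} ∩ (⋃ B ∈ S.powerset, E B) =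
      ⋃ B ∈ S.powerset.filter (fun B => ψ B true = 1 ∧ ψ B false = 0), E B := by
    ext ω
    simp only [Set.mem_inter_iff, Set.mem_iUnion, Set.mem_setOf_eq, mem_filter, exists_prop]
    constructor
    · rintro ⟨hG, B, hB, hE⟩
      exact ⟨B, ⟨hB, (hkey B hB ω hE).1 hG⟩, hE⟩
    · rintro ⟨B, ⟨hB, hcond⟩, hE⟩
      exact ⟨(hkey B hB ω hE).2 hcond, B, hB, hE⟩
  have hGmeasure : (μ {ω | sysLifeOn T Finset.univ φ ω = L ω}).toReal =
      ∑ B ∈ S.powerset.filter (fun B => ψ B true = 1 ∧ ψ B false = 0),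
        (μ (E B)).toReal := by
    have hsubPD : (↑(S.powerset.filter (fun B => ψ B true = 1 ∧ ψ B false = 0)) :
        Set (Finset (Fin n))).PairwiseDisjoint E := by
      refine hPD.subset ?_
      exact_mod_cast Finset.filter_subset (fun B => ψ B true = 1 ∧ ψ B false = 0) S.powerset
    rw [hGU, hGUeq, measure_biUnion_finset hsubPD (fun B _ => hEmeas B),
      ENNReal.toReal_sum (fun B _ => measure_ne_top μ _)]
  -- compute the integral on the right-hand side
  have hintg : ∀ B ∈ S.powerset, IntervalIntegrable
      (fun t : ℝ => t ^ B.card * (1 - t) ^ (N - B.card) * (ψ B true - ψ B false))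
      volume 0 1 := by
    intro B _
    exact Continuous.intervalIntegrable
      (((continuous_pow B.card).mul ((continuous_const.sub continuous_id).pow _)).mul
        continuous_const) 0 1
  rw [hGmeasure, intervalIntegral.integral_finset_sum hintg]
  -- per-term value of the integral
  have hterm : ∀ B ∈ S.powerset,
      (∫ t in (0:ℝ)..1, t ^ B.card * (1 - t) ^ (N - B.card) * (ψ B true - ψ B false)) =
        (1 / (((N + 1 : ℕ) : ℝ) * ((N.choose B.card : ℕ) : ℝ))) *
          (ψ B true - ψ B false) := by
    intro B hB
    have hBle : B.card ≤ N := by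
      rw [← hScard]; exact card_le_card (mem_powerset.1 hB)
    rw [intervalIntegral.integral_mul_const, beta_nat B.card (N - B.card)]
    have hNeq : B.card + (N - B.card) + 1 = N + 1 := by omega
    rw [hNeq]
    congr 1
    have hfact := Nat.choose_mul_factorial_mul_factorial hBle
    have hfact1 : ((N + 1).factorial : ℝ) =
        ((N + 1 : ℕ) : ℝ) * (N.choose B.card : ℝ) *
          ((B.card.factorial : ℝ) * ((N - B.card).factorial : ℝ)) := by
      rw [Nat.factorial_succ]
      push_cast [← hfact]
      ring
    have hfpos : (0:ℝ) < (B.card.factorial : ℝ) * ((N - B.card).factorial : ℝ) := by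
      positivity
    have hchoosepos : (0:ℝ) < (N.choose B.card : ℝ) := by
      exact_mod_cast Nat.choose_pos hBle
    rw [hfact1]
    push_cast
    field_simp
  rw [Finset.sum_congr rfl hterm]
  -- compare the two sums
  rw [Finset.sum_filter]
  refine Finset.sum_congr rfl fun B hB => ?_
  have hBS : B ⊆ S := mem_powerset.1 hB
  have hψfb : ψ B false ≤ ψ B true := hψmono B B false true (subset_refl B) hBS (by simp)
  rcases hψ01 B true hBS with hT | hT
  · have hF : ψ B false = 0 := by
      rcases hψ01 B false hBS with h | h
      · exact h
      · exfalso; rw [h, hT] at hψfb; linarith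
    rw [if_neg (by rw [hT]; intro h; exact absurd h.1 (by norm_num)), hT, hF]
    ring
  · rcases hψ01 B false hBS with hF | hF
    · rw [if_pos ⟨hT, hF⟩, hqE B hB, hT, hF]
      push_cast
      ring
    · rw [if_neg (by rw [hF]; intro h; exact absurd h.2 (by norm_num)), hT, hF]
      ring
end
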